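/- arXiv:2111.14573 — 13 statements merged into one kernel-verified Lean document; each statement's English description precedes it below -/
import Mathlib

section
/- Let R be a finite commutative ring with unit element. Then s(R) = |R| holds if and only if R is one of the following: (a) R is a finite field, or (b) R is isomorphic to ℤ/4ℤ, or (c) R is isomorphic to the ring ρ with four elements {0, 1, a, 1+a} satisfying 1+1 = 0 and a² = 0 (equivalently, ρ ≅ (ℤ/2ℤ)[X]/(X²), the dual numbers over ℤ/2ℤ). -/
/-!
Let `t` be the largest nilpotency class of a nilpotent of `R`. Every `x` satisfies
`x ^ (t + |Rˣ|) = x ^ t`, so `s(R) ≤ t + |Rˣ| ≤ |nil R| + |Rˣ| ≤ |R|`. If `s(R) = |R|`, equality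
holds throughout: every element is a unit or nilpotent, and the nilradical consists of the powers
of a single element `z`. Then `u z = z` for every unit `u`, so `z ^ 2 = 0` and
`R = {0, z, 1, 1 + z}`, which is `𝔽₂[ε]` or `ℤ/4` according as `2 = 0` or `2 = z`.
Conversely, over a finite field `X ^ m - p` cannot vanish everywhere when `m < |R|`, and the two
rings of order `4` are settled by exhaustion.
-/

open Polynomial

/-- `s(R)` is `sInf (reducibleExponents R)`. -/
def reducibleExponents (R : Type*) [CommRing R] : Set ℕ :=
  {m | ∃ p : R[X], p.degree < m ∧ ∀ x, p.eval x = x ^ m}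

section ReducibleExponents

variable {R : Type*} [CommRing R]

theorem zero_mem_reducibleExponents [Subsingleton R] : 0 ∈ reducibleExponents R :=
  ⟨0, by simp, fun _ => Subsingleton.elim _ _⟩

theorem add_mem_reducibleExponents [Nontrivial R] {t l : ℕ} (hl : 0 < l)
    (h : ∀ x : R, x ^ (t + l) = x ^ t) : t + l ∈ reducibleExponents R :=
  ⟨X ^ t, by rw [degree_X_pow]; exact_mod_cast Nat.lt_add_of_pos_right hl, fun x => by simp [h]⟩

theorem reducibleExponents_subset_of_surjective {S F : Type*} [CommRing S] [FunLike F R S]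
    [RingHomClass F R S] {f : F} (hf : Function.Surjective f) :
    reducibleExponents R ⊆ reducibleExponents S := by
  rintro m ⟨p, hdeg, heval⟩
  refine ⟨p.map (f : R →+* S), degree_map_le.trans_lt hdeg, fun y => ?_⟩
  obtain ⟨x, rfl⟩ := hf y
  rw [← RingHom.coe_coe f, eval_map_apply, heval, map_pow]

/-- `X ^ |R|` agrees on `R` with `X ^ |R| - ∏ a, (X - a)`, which has smaller degree. -/
theorem card_mem_reducibleExponents [Fintype R] [Nontrivial R] :
    Fintype.card R ∈ reducibleExponents R := by
  set q : R[X] := ∏ a, (X - C a)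
  have hq : q.degree = Fintype.card R := by
    rw [degree_eq_natDegree (monic_prod_X_sub_C _ _).ne_zero,
      natDegree_finsetProd_X_sub_C_eq_card, Finset.card_univ]
  refine ⟨X ^ Fintype.card R - q, ?_, fun x => ?_⟩
  · have := degree_sub_lt_left (p := X ^ Fintype.card R) (q := q) (by rw [degree_X_pow, hq])
      (monic_X_pow _).ne_zero (by rw [leadingCoeff_X_pow, (monic_prod_X_sub_C _ _).leadingCoeff])
    rwa [degree_X_pow] at this
  · rw [eval_sub, eval_pow, eval_X, eval_prod, Finset.prod_eq_zero (Finset.mem_univ x) (by simp),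
      sub_zero]

theorem sInf_reducibleExponents_eq_card_iff [Fintype R] [Nontrivial R] :
    sInf (reducibleExponents R) = Fintype.card R ↔
      ∀ m ∈ reducibleExponents R, Fintype.card R ≤ m := by
  refine ⟨fun h m hm => h ▸ Nat.sInf_le hm, fun h => ?_⟩
  exact le_antisymm (Nat.sInf_le card_mem_reducibleExponents)
    (le_csInf ⟨_, card_mem_reducibleExponents⟩ h)

theorem exists_coeffs_of_mem_reducibleExponents {m : ℕ} (hm : m ∈ reducibleExponents R) :
    ∃ c : Fin m → R, ∀ x, ∑ i, c i * x ^ (i : ℕ) = x ^ m := by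
  obtain ⟨p, hdeg, heval⟩ := hm
  have hp : p ∈ degreeLT R m := mem_degreeLT.2 hdeg
  exact ⟨degreeLTEquiv R m ⟨p, hp⟩, fun x => (eval_eq_sum_degreeLTEquiv hp x).symm.trans (heval x)⟩

theorem card_le_of_mem_reducibleExponents [IsDomain R] [Fintype R] {m : ℕ}
    (hm : m ∈ reducibleExponents R) : Fintype.card R ≤ m := by
  obtain ⟨p, hdeg, heval⟩ := hm
  have hdeg' : (X ^ m - p).degree = (m : WithBot ℕ) := by
    rw [degree_sub_eq_left_of_degree_lt (by rwa [degree_X_pow]), degree_X_pow]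
  by_contra! hlt
  have := eq_zero_of_natDegree_lt_card_of_eval_eq_zero (X ^ m - p) Function.injective_id
    (fun x => by simp [heval]) (by rwa [natDegree_eq_of_degree_eq_some hdeg'])
  simp [this] at hdeg'

end ReducibleExponents

theorem exists_isIdempotentElem_pow {M : Type*} [Monoid M] [Finite M] (x : M) :
    ∃ m ≠ 0, IsIdempotentElem (x ^ m) := by
  obtain ⟨a, b, hne, hab⟩ := Finite.exists_ne_map_eq_of_infinite (x ^ · : ℕ → M)
  wlog hlt : a < b generalizing a b
  · exact this b a hne.symm hab.symm (by omega)
  obtain ⟨p, hp, rfl⟩ : ∃ p, 0 < p ∧ b = a + p := ⟨b - a, by omega, by omega⟩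
  have hperiod : ∀ c, a ≤ c → ∀ k, x ^ (c + p * k) = x ^ c := by
    intro c hc k
    obtain ⟨d, rfl⟩ := Nat.exists_eq_add_of_le hc
    induction k with
    | zero => simp
    | succ k ih =>
      calc x ^ (a + d + p * (k + 1)) = x ^ (a + p) * x ^ (d + p * k) := by
            rw [← pow_add]; ring_nf
        _ = x ^ (a + d + p * k) := by rw [← hab, ← pow_add]; ring_nf
        _ = x ^ (a + d) := ih
  refine ⟨p * (a + 1), by positivity, ?_⟩
  rw [IsIdempotentElem, ← pow_add, hperiod _ (by nlinarith) (a + 1)]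

section FiniteCommRing

variable {R : Type*} [CommRing R]

/-- For `e = x ^ m` idempotent, `e x + (1 - e)` is a unit (its `m`-th power is `1`) and
`(1 - e) x` is nilpotent, so `x ^ l` acts as `1` on `e R` while `x ^ t` vanishes on `(1 - e) R`. -/
theorem pow_add_eq_pow_of_forall_isNilpotent [Finite R] {t l : ℕ}
    (ht : ∀ w : R, IsNilpotent w → w ^ t = 0) (hl : ∀ u : Rˣ, u ^ l = 1) (x : R) :
    x ^ (t + l) = x ^ t := by
  obtain ⟨m, hm, he⟩ := exists_isIdempotentElem_pow x
  set e := x ^ m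
  have hpow : ∀ k, (e * x + (1 - e)) ^ k = e * x ^ k + (1 - e) := by
    intro k
    induction k with
    | zero => ring
    | succ k ih => rw [pow_succ, ih]; linear_combination (x ^ (k + 1) - x ^ k - x + 1) * he.eq
  have hex : e * x ^ l = e := by
    have hunit : IsUnit (e * x + (1 - e)) :=
      .of_pow_eq_one (by rw [hpow, he.eq]; ring) hm
    have := hpow l
    rw [← hunit.unit_spec, ← Units.val_pow_eq_pow_val, hl, Units.val_one] at this
    linear_combination -this
  have hxe : x ^ t = x ^ t * e := by
    rcases Nat.eq_zero_or_pos t with rfl | htpos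
    · have : Subsingleton R := subsingleton_of_zero_eq_one (by simpa using (ht 0 .zero).symm)
      exact Subsingleton.elim _ _
    have hnil : IsNilpotent (x * (1 - e)) :=
      ⟨m, by rw [mul_pow, he.one_sub.pow_eq hm, mul_sub, mul_one, he.eq, sub_self]⟩
    have := ht _ hnil
    rw [mul_pow, he.one_sub.pow_eq htpos.ne'] at this
    linear_combination this
  rw [pow_add, hxe, mul_assoc, hex]

theorem IsNilpotent.eq_zero_of_eq_mul {z w : R} (hw : IsNilpotent w) (h : z = z * w) :
    z = 0 :=
  hw.isUnit_one_sub.mul_left_eq_zero.1 (by rw [mul_sub, mul_one, ← h, sub_self])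

theorem IsNilpotent.pow_eq_zero_of_pow_eq_pow {z : R} (hz : IsNilpotent z) {a b : ℕ}
    (hab : a < b) (h : z ^ a = z ^ b) : z ^ a = 0 :=
  (hz.pow_of_pos (Nat.sub_ne_zero_of_lt hab)).eq_zero_of_eq_mul
    (by rw [← pow_add, Nat.add_sub_cancel' hab.le, h])

theorem IsNilpotent.injective_pow_succ {z : R} (hz : IsNilpotent z) :
    Function.Injective fun i : Fin (nilpotencyClass z) =>
      (⟨z ^ ((i : ℕ) + 1), mem_nilradical.2 (hz.pow_of_pos (by omega))⟩ : nilradical R) := by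
  refine .of_lt_imp_ne fun i j hij heq => ?_
  have hzero := hz.pow_eq_zero_of_pow_eq_pow (by omega) (congrArg Subtype.val heq)
  have : nilpotencyClass z ≤ i + 1 := Nat.sInf_le hzero
  omega

theorem IsNilpotent.nilpotencyClass_le_card_nilradical [Finite R] {z : R} (hz : IsNilpotent z) :
    nilpotencyClass z ≤ Nat.card (nilradical R) := by
  simpa using Nat.card_le_card_of_injective _ hz.injective_pow_succ

theorem injective_sumElim_nilradical_units [Nontrivial R] :
    Function.Injective (Sum.elim (↑) (↑) : nilradical R ⊕ Rˣ → R) :=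
  Subtype.val_injective.sumElim Units.val_injective fun w u h =>
    (mem_nilradical.1 w.2).not_isUnit (h ▸ u.isUnit)

theorem card_nilradical_add_card_units_le [Finite R] [Nontrivial R] :
    Nat.card (nilradical R) + Nat.card Rˣ ≤ Nat.card R := by
  simpa using Nat.card_le_card_of_injective _ (injective_sumElim_nilradical_units (R := R))

theorem isUnit_or_isNilpotent_of_card_le [Finite R] [Nontrivial R]
    (h : Nat.card R ≤ Nat.card (nilradical R) + Nat.card Rˣ) (x : R) :
    IsUnit x ∨ IsNilpotent x := by
  obtain ⟨w | u, rfl⟩ :=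
    (injective_sumElim_nilradical_units.bijective_of_nat_card_le (by simpa using h)).2 x
  exacts [.inr (mem_nilradical.1 w.2), .inl u.isUnit]

theorem isField_of_forall_isUnit_or_eq_zero [Nontrivial R] (h : ∀ x : R, IsUnit x ∨ x = 0) :
    IsField R :=
  ⟨exists_pair_ne R, mul_comm, fun {a} ha => ((h a).resolve_right ha).exists_right_inv⟩

end FiniteCommRing

instance {R M : Type*} [Fintype R] [Fintype M] : Fintype (TrivSqZeroExt R M) :=
  inferInstanceAs (Fintype (R × M))

instance {R M : Type*} [DecidableEq R] [DecidableEq M] : DecidableEq (TrivSqZeroExt R M) :=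
  inferInstanceAs (DecidableEq (R × M))

section Classification

variable {R : Type*} [CommRing R] [Fintype R]

theorem nonempty_ringEquiv_of_forall_eq {z : R} (hz : z ≠ 0) (hz2 : z * z = 0)
    (h : ∀ x : R, x = 0 ∨ x = z ∨ x = 1 ∨ x = 1 + z) :
    Nonempty (R ≃+* ZMod 4) ∨ Nonempty (R ≃+* DualNumber (ZMod 2)) := by
  have : Nontrivial R := ⟨⟨z, 0, hz⟩⟩
  have hz1 : z ≠ 1 := fun h1 => one_ne_zero (by rwa [h1, one_mul] at hz2)
  have hz1' : 1 + z ≠ 0 := (IsNilpotent.isUnit_one_add ⟨2, by rw [sq, hz2]⟩).ne_zero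
  have hcard : Fintype.card R = 4 := by
    classical
    rw [← Finset.card_univ, ← Finset.eq_univ_of_forall (s := {0, z, 1, 1 + z})
      fun x => by simpa using h x]
    rw [Finset.card_insert_of_notMem, Finset.card_insert_of_notMem, Finset.card_pair]
    all_goals simp [hz, hz1, Ne.symm hz, Ne.symm hz1']
  rcases h 2 with h2 | h2 | h2 | h2
  · right
    have : CharP R 2 := CharTwo.of_one_ne_zero_of_two_eq_zero one_ne_zero h2
    let := ZMod.algebra R 2
    let F := DualNumber.lift ⟨(Algebra.ofId (ZMod 2) R, z), hz2, fun _ => .all _ _⟩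
    have hF : Function.Surjective F := by
      intro x
      rcases h x with rfl | rfl | rfl | rfl
      exacts [⟨0, map_zero F⟩, ⟨DualNumber.eps, DualNumber.lift_apply_eps _⟩, ⟨1, map_one F⟩,
        ⟨1 + DualNumber.eps, by simp [F]⟩]
    exact ⟨(RingEquiv.ofBijective F
      ((Fintype.bijective_iff_surjective_and_card F).2 ⟨hF, hcard ▸ rfl⟩)).symm⟩
  · left
    have : CharP R (2 ^ 2) := charP_of_prime_pow_injective R 2 2 hcard fun i hi hi0 => by
      interval_cases i
      · simp at hi0
      · exact absurd (by simpa [h2] using hi0) hz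
      · rfl
    exact ⟨(ZMod.ringEquiv R hcard).symm⟩
  · exact absurd (by linear_combination h2 : (1 : R) = 0) one_ne_zero
  · exact absurd (by linear_combination -h2 : z = 1) hz1

theorem isField_or_nonempty_ringEquiv_of_card_nilradical_le [Nontrivial R]
    (hloc : ∀ x : R, IsUnit x ∨ IsNilpotent x) {z : R} (hz : IsNilpotent z)
    (hcard : Nat.card (nilradical R) ≤ nilpotencyClass z) :
    IsField R ∨ Nonempty (R ≃+* ZMod 4) ∨ Nonempty (R ≃+* DualNumber (ZMod 2)) := by
  have hpow : ∀ w : R, IsNilpotent w → ∃ i, w = z ^ (i + 1) := by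
    intro w hw
    obtain ⟨i, hi⟩ := (hz.injective_pow_succ.bijective_of_nat_card_le (by simpa using hcard)).2
      ⟨w, mem_nilradical.2 hw⟩
    exact ⟨i, (congrArg Subtype.val hi).symm⟩
  by_cases hz0 : z = 0
  · subst hz0
    refine .inl <| isField_of_forall_isUnit_or_eq_zero fun x => (hloc x).imp_right fun hx => ?_
    obtain ⟨i, rfl⟩ := hpow x hx
    exact zero_pow i.succ_ne_zero
  have hunit_mul : ∀ u : R, IsUnit u → u * z = z := by
    rintro _ ⟨u, rfl⟩
    obtain ⟨_ | i, hi⟩ := hpow _ ((Commute.all _ _).isNilpotent_mul_left hz)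
    · simpa using hi
    · refine absurd (IsNilpotent.eq_zero_of_eq_mul (w := ↑u⁻¹ * z ^ (i + 1))
        ((Commute.all _ _).isNilpotent_mul_left (hz.pow_of_pos i.succ_ne_zero)) ?_) hz0
      calc z = ↑u⁻¹ * (u * z) := by simp
        _ = z * (↑u⁻¹ * z ^ (i + 1)) := by rw [hi]; ring
  have hz2 : z * z = 0 := by linear_combination hunit_mul _ hz.isUnit_one_add
  have hnil : ∀ w : R, IsNilpotent w → w = 0 ∨ w = z := by
    intro w hw
    obtain ⟨_ | i, rfl⟩ := hpow w hw
    · simp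
    · left; rw [pow_succ, pow_succ, mul_assoc, hz2, mul_zero]
  refine .inr <| nonempty_ringEquiv_of_forall_eq hz0 hz2 fun x => ?_
  rcases hloc x with hx | hx
  · -- `(x - 1) z = 0` with `z ≠ 0`, so `x - 1` is nilpotent
    have : ¬ IsUnit (x - 1) := fun h =>
      hz0 (h.mul_right_eq_zero.1 (by linear_combination hunit_mul x hx))
    rcases hnil _ ((hloc _).resolve_left this) with h | h
    · exact .inr <| .inr <| .inl (by linear_combination h)
    · exact .inr <| .inr <| .inr (by linear_combination h)
  · rcases hnil x hx with h | h
    exacts [.inl h, .inr (.inl h)]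

theorem isField_or_nonempty_ringEquiv_of_sInf_reducibleExponents_eq_card
    (h : sInf (reducibleExponents R) = Fintype.card R) :
    IsField R ∨ Nonempty (R ≃+* ZMod 4) ∨ Nonempty (R ≃+* DualNumber (ZMod 2)) := by
  have : Nontrivial R := by
    by_contra hR
    have : Subsingleton R := not_nontrivial_iff_subsingleton.1 hR
    have := h ▸ Nat.sInf_le zero_mem_reducibleExponents
    simp at this
  have hS := sInf_reducibleExponents_eq_card_iff.1 h
  obtain ⟨z, hz, hmax⟩ := Set.exists_max_image {w : R | IsNilpotent w} (nilpotencyClass ·)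
    (Set.toFinite _) ⟨0, .zero⟩
  have hpow : ∀ x : R, x ^ (nilpotencyClass z + Nat.card Rˣ) = x ^ nilpotencyClass z :=
    pow_add_eq_pow_of_forall_isNilpotent
      (fun w hw => pow_eq_zero_of_le (hmax w hw) (pow_nilpotencyClass hw)) fun _ => pow_card_eq_one'
  have h₁ := hS _ (add_mem_reducibleExponents Nat.card_pos hpow)
  rw [← Nat.card_eq_fintype_card] at h₁
  have h₂ := hz.nilpotencyClass_le_card_nilradical
  have h₃ := card_nilradical_add_card_units_le (R := R)
  exact isField_or_nonempty_ringEquiv_of_card_nilradical_le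
    (isUnit_or_isNilpotent_of_card_le (by omega)) hz (by omega)

end Classification

section Converse

variable {R : Type*} [CommRing R] [Fintype R]

theorem sInf_reducibleExponents_eq_card_of_isField (h : IsField R) :
    sInf (reducibleExponents R) = Fintype.card R :=
  have := h.isDomain
  sInf_reducibleExponents_eq_card_iff.2 fun _ => card_le_of_mem_reducibleExponents

theorem sInf_reducibleExponents_eq_card_of_forall
    (h : ∀ m < Fintype.card R, ∀ c : Fin m → R, ¬ ∀ x, ∑ i, c i * x ^ (i : ℕ) = x ^ m) :
    sInf (reducibleExponents R) = Fintype.card R := by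
  have : Nontrivial R := by
    by_contra hR
    have : Subsingleton R := not_nontrivial_iff_subsingleton.1 hR
    exact h 0 Fintype.card_pos Fin.elim0 fun _ => Subsingleton.elim _ _
  refine sInf_reducibleExponents_eq_card_iff.2 fun m hm => le_of_not_gt fun hlt => ?_
  obtain ⟨c, hc⟩ := exists_coeffs_of_mem_reducibleExponents hm
  exact h m hlt c hc

theorem sInf_reducibleExponents_eq_card_of_ringEquiv {S : Type*} [CommRing S] [Fintype S]
    (e : R ≃+* S) (h : sInf (reducibleExponents S) = Fintype.card S) :
    sInf (reducibleExponents R) = Fintype.card R := by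
  rw [(reducibleExponents_subset_of_surjective e.surjective).antisymm
    (reducibleExponents_subset_of_surjective e.symm.surjective), h,
    Fintype.card_congr e.toEquiv]

end Converse

/-- For a finite commutative ring `R` with unit element,
`s(R) = |R|` holds iff `R` is a finite field, or `R ≅ ℤ/4ℤ`, or `R` is
isomorphic to the dual numbers over `ℤ/2ℤ` (the ring ρ). Here
`s(R)` is the minimal `m : ℕ` such that some polynomial `p ∈ R[x]` with
`deg p < m` satisfies `p(x) = x^m` for all `x ∈ R`. -/
theorem stmt_0 (R : Type*) [CommRing R] [Fintype R] :
    sInf {m : ℕ | ∃ p : Polynomial R,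
        p.degree < (m : WithBot ℕ) ∧ ∀ x : R, p.eval x = x ^ m}
      = Fintype.card R
    ↔ IsField R ∨ Nonempty (R ≃+* ZMod 4)
        ∨ Nonempty (R ≃+* DualNumber (ZMod 2)) := by
  refine ⟨isField_or_nonempty_ringEquiv_of_sInf_reducibleExponents_eq_card, ?_⟩
  rintro (hR | ⟨⟨e⟩⟩ | ⟨⟨e⟩⟩)
  · exact sInf_reducibleExponents_eq_card_of_isField hR
  · exact sInf_reducibleExponents_eq_card_of_ringEquiv e
      (sInf_reducibleExponents_eq_card_of_forall (by decide))
  · exact sInf_reducibleExponents_eq_card_of_ringEquiv e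
      (sInf_reducibleExponents_eq_card_of_forall (by decide))
end

section
/- If R is a commutative ring with unit element which has zero divisors (i.e., there exist nonzero u, v ∈ R with uv = 0), then either (a) there exist a, b ∈ R \ {0} with a ≠ b and ab = 0, or (b) R is isomorphic to ℤ/4ℤ, or (c) R is isomorphic to the ring ρ with four elements {0, 1, a, 1+a} satisfying 1+1 = 0 and a² = 0 (equivalently, ρ ≅ (ℤ/2ℤ)[X]/(X²), the dual numbers over ℤ/2ℤ). -/
/-- If a commutative ring `R` with unit element has zero divisors
(there exist nonzero `u, v` with `u * v = 0`), then either there exist two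
*distinct* nonzero elements `a ≠ b` with `a * b = 0`, or `R ≅ ℤ/4ℤ`, or `R`
is isomorphic to the ring ρ, i.e. the dual numbers over `ℤ/2ℤ`. -/
theorem stmt_1 (R : Type*) [CommRing R]
    (h : ∃ u v : R, u ≠ 0 ∧ v ≠ 0 ∧ u * v = 0) :
    (∃ a b : R, a ≠ 0 ∧ b ≠ 0 ∧ a ≠ b ∧ a * b = 0)
      ∨ Nonempty (R ≃+* ZMod 4)
      ∨ Nonempty (R ≃+* DualNumber (ZMod 2)) := by
  by_cases hcase : ∃ a b : R, a ≠ 0 ∧ b ≠ 0 ∧ a ≠ b ∧ a * b = 0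
  · exact Or.inl hcase
  push_neg at hcase
  obtain ⟨u, v, hu, hv, huv⟩ := h
  have huveq : u = v := by
    by_contra hne
    exact hcase u v hu hv hne huv
  subst huveq
  -- u ≠ 0, u * u = 0
  haveI : Nontrivial R := nontrivial_of_ne u 0 hu
  have hu2 : u * u = 0 := huv
  -- annihilator of u is {0, u}
  have ann : ∀ r : R, r * u = 0 → r = 0 ∨ r = u := by
    intro r hr
    by_contra hcon
    push_neg at hcon
    exact hcase r u hcon.1 hu hcon.2 hr
  have h2u : (2 : R) * u = 0 := by
    rcases ann (2 * u) (by linear_combination 2 * hu2) with h0 | h1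
    · exact h0
    · exfalso; apply hu; linear_combination h1
  -- classification of all elements
  have classify : ∀ r : R, r = 0 ∨ r = u ∨ r = 1 ∨ r = 1 + u := by
    intro r
    rcases ann (r * u) (by linear_combination r * hu2) with h0 | h1
    · rcases ann r h0 with h | h
      · exact Or.inl h
      · exact Or.inr (Or.inl h)
    · rcases ann (r - 1) (by linear_combination h1) with h | h
      · exact Or.inr (Or.inr (Or.inl (by linear_combination h)))
      · exact Or.inr (Or.inr (Or.inr (by linear_combination h)))
  -- distinctness facts among 0, u, 1, 1 + u
  have h01 : (0 : R) ≠ 1 := zero_ne_one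
  have h0u : (0 : R) ≠ u := fun hh => hu hh.symm
  have h1u : (1 : R) ≠ u := fun hh =>
    one_ne_zero (α := R) (by linear_combination (1 + u) * hh + hu2)
  have h0_1u : (0 : R) ≠ 1 + u := fun hh =>
    one_ne_zero (α := R) (by linear_combination (u - 1) * hh + hu2)
  have h1_1u : (1 : R) ≠ 1 + u := fun hh => hu (by linear_combination -hh)
  have hu_1u : u ≠ 1 + u := fun hh =>
    one_ne_zero (α := R) (by linear_combination -hh)
  rcases ann 2 h2u with h2 | h2
  · -- characteristic 2 : dual numbers case
    have hchar : ringChar R = 2 := by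
      have hdvd : ringChar R ∣ 2 := ringChar.dvd (by exact_mod_cast h2)
      have hne1 : ringChar R ≠ 1 := CharP.ringChar_ne_one
      have hle := Nat.le_of_dvd (by norm_num) hdvd
      interval_cases h : ringChar R <;> omega
    haveI : CharP R 2 := hchar ▸ ringChar.charP R
    let c : ZMod 2 →+* R := ZMod.castHom dvd_rfl R
    let f : DualNumber (ZMod 2) →+* R :=
      { toFun := fun x => c x.fst + c x.snd * u
        map_one' := by simp
        map_mul' := by
          intro x y
          simp only [TrivSqZeroExt.fst_mul, TrivSqZeroExt.snd_mul, smul_eq_mul,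
            MulOpposite.smul_eq_mul_unop, MulOpposite.unop_op, map_add, map_mul]
          linear_combination (-(c x.snd * c y.snd)) * hu2
        map_zero' := by simp
        map_add' := by
          intro x y
          simp only [TrivSqZeroExt.fst_add, TrivSqZeroExt.snd_add, map_add]
          ring }
    have hf0 : ∀ a b : ZMod 2, f ⟨a, b⟩ = c a + c b * u := fun _ _ => rfl
    have hz2 : ∀ a : ZMod 2, a = 0 ∨ a = 1 := by decide
    have hbij : Function.Bijective f := by
      constructor
      · intro x y hxy
        obtain ⟨a, b⟩ := x
        obtain ⟨a', b'⟩ := y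
        rw [hf0, hf0] at hxy
        rcases hz2 a with rfl | rfl <;> rcases hz2 b with rfl | rfl <;>
          rcases hz2 a' with rfl | rfl <;> rcases hz2 b' with rfl | rfl <;>
          simp only [map_zero, map_one, zero_mul, one_mul, zero_add, add_zero] at hxy <;>
          first
            | rfl
            | exact absurd hxy h01 | exact absurd hxy.symm h01
            | exact absurd hxy h0u | exact absurd hxy.symm h0u
            | exact absurd hxy h1u | exact absurd hxy.symm h1u
            | exact absurd hxy h0_1u | exact absurd hxy.symm h0_1u
            | exact absurd hxy h1_1u | exact absurd hxy.symm h1_1u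
            | exact absurd hxy hu_1u | exact absurd hxy.symm hu_1u
      · intro r
        rcases classify r with h | h | h | h
        · exact ⟨⟨0, 0⟩, by rw [hf0, map_zero, h]; ring⟩
        · exact ⟨⟨0, 1⟩, by rw [hf0, map_zero, map_one, h]; ring⟩
        · exact ⟨⟨1, 0⟩, by rw [hf0, map_zero, map_one, h]; ring⟩
        · exact ⟨⟨1, 1⟩, by rw [hf0, map_one, h]; ring⟩
    exact Or.inr (Or.inr ⟨(RingEquiv.ofBijective f hbij).symm⟩)
  · -- 2 = u : characteristic 4 case
    have h4 : (4 : R) = 0 := by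
      have h44 : (4 : R) = 2 * 2 := by norm_num
      rw [h44, h2]; exact hu2
    have hchar : ringChar R = 4 := by
      have hdvd : ringChar R ∣ 4 := ringChar.dvd (by exact_mod_cast h4)
      have hne1 : ringChar R ≠ 1 := CharP.ringChar_ne_one
      have hne2 : ringChar R ≠ 2 := by
        intro hh
        haveI : CharP R 2 := hh ▸ ringChar.charP R
        have h20 : (2 : R) = 0 := by exact_mod_cast CharP.cast_eq_zero R 2
        rw [h20] at h2; exact hu h2.symm
      have hle := Nat.le_of_dvd (by norm_num) hdvd
      interval_cases h : ringChar R <;> omega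
    haveI : CharP R 4 := hchar ▸ ringChar.charP R
    let f : ZMod 4 →+* R := ZMod.castHom dvd_rfl R
    have hf2 : f 2 = (2 : R) := by
      have h211 : (2 : ZMod 4) = 1 + 1 := by decide
      rw [h211, map_add, map_one]; norm_num
    have hf3 : f 3 = 1 + (2 : R) := by
      have h311 : (3 : ZMod 4) = 1 + (1 + 1) := by decide
      rw [h311, map_add, map_add, map_one]; norm_num
    have hbij : Function.Bijective f := by
      refine ⟨ZMod.castHom_injective R, ?_⟩
      intro r
      rcases classify r with h | h | h | h
      · exact ⟨0, by rw [map_zero, h]⟩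
      · exact ⟨2, by rw [hf2, h]; exact h2⟩
      · exact ⟨1, by rw [map_one, h]⟩
      · exact ⟨3, by rw [hf3, h, ← h2]⟩
    exact Or.inr (Or.inl ⟨(RingEquiv.ofBijective f hbij).symm⟩)
end

section
/- (Rédei–Szele) Let R be a commutative ring with unit element. Then R is a finite field if and only if every function f : R → R can be represented by a polynomial in R[x], i.e., for every f : R → R there exists p ∈ R[x] with p(x) = f(x) for all x ∈ R. -/
/-- Rédei–Szele: A (nontrivial) commutative ring `R` with unit
element is a finite field iff every function `f : R → R` is represented by
some polynomial `p ∈ R[x]`. -/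
theorem stmt_2 (R : Type*) [CommRing R] [Nontrivial R] :
    (Finite R ∧ IsField R)
      ↔ ∀ f : R → R, ∃ p : Polynomial R, ∀ x : R, p.eval x = f x := by
  constructor
  · rintro ⟨hFin, hField⟩ f
    letI := hField.toField
    letI := Fintype.ofFinite R
    classical
    refine ⟨Lagrange.interpolate Finset.univ id f, fun x => ?_⟩
    simpa using Lagrange.eval_interpolate_at_node f
      (Set.injOn_id _) (Finset.mem_univ x)
  · intro h
    classical
    have hfin : Finite R := by
      by_contra hinf
      have : Infinite R := not_finite_iff_infinite.mp hinf
      have hsurj : Function.Surjective (fun (p : Polynomial R) (x : R) => p.eval x) := by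
        intro f
        obtain ⟨p, hp⟩ := h f
        exact ⟨p, funext hp⟩
      have h1 : Cardinal.mk (R → R) ≤ Cardinal.mk (Polynomial R) :=
        Cardinal.mk_le_of_surjective hsurj
      have h2 : Cardinal.mk (Polynomial R) = Cardinal.mk R := by
        rw [Polynomial.cardinalMk_eq_max, max_eq_left (Cardinal.aleph0_le_mk R)]
      have h3 : (2 : Cardinal) ^ Cardinal.mk R ≤ Cardinal.mk (R → R) := by
        rw [← Cardinal.power_def]
        exact Cardinal.power_le_power_right (Cardinal.two_le_iff.mpr
          (exists_pair_ne R))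
      have := Cardinal.cantor (Cardinal.mk R)
      have : (2 : Cardinal) ^ Cardinal.mk R ≤ Cardinal.mk R := h3.trans (h1.trans_eq h2)
      exact absurd this (not_le.mpr (Cardinal.cantor _))
    refine ⟨hfin, ⟨exists_pair_ne R, mul_comm, ?_⟩⟩
    intro a ha
    obtain ⟨p, hp⟩ := h (fun x => if x = a then 1 else 0)
    have h0 : p.coeff 0 = 0 := by
      have := hp 0
      simp [ha, Ne.symm ha] at this
      rwa [Polynomial.coeff_zero_eq_eval_zero]
    have key : p.eval a = a * (p.divX).eval a := by
      conv_lhs => rw [← Polynomial.X_mul_divX_add p]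
      simp [h0, mul_comm]
    refine ⟨(p.divX).eval a, ?_⟩
    have := hp a
    simp at this
    rw [key] at this
    exact this
end

section
/- Let R be a commutative ring with unit element and let R' be the subring of R generated by the unit element 1. If there exist n ∈ ℕ and a polynomial p ∈ R[x] with deg p < n such that p(x) = x^n for all x ∈ R (in particular if s(R) < ∞ with n = s(R)), then R' is a finite ring and |R'| divides n!. -/
open Polynomial

lemma key_factorial_coeff (R : Type*) [CommRing R] :
    ∀ (n : ℕ) (q : Polynomial R), q.degree ≤ (n : WithBot ℕ) →
      (∀ x : R, q.eval x = 0) → (n.factorial : R) * q.coeff n = 0 := by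
  intro n
  induction n with
  | zero =>
    intro q hdeg hev
    have hq : q = C (q.coeff 0) := Polynomial.eq_C_of_degree_le_zero hdeg
    have := hev 0
    rw [hq] at this
    simp at this
    simp [this]
  | succ n ih =>
    intro q hdeg hev
    have hnat : q.natDegree ≤ n + 1 := natDegree_le_iff_degree_le.mpr (by exact_mod_cast hdeg)
    set r : Polynomial R := taylor 1 q - q with hr
    have hev' : ∀ x : R, r.eval x = 0 := by
      intro x
      simp [hr, taylor_apply, eval_comp, hev]
    -- coefficients of r above n vanish
    have hhigh : ∀ k : ℕ, n < k → r.coeff k = 0 := by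
      intro k hk
      rcases eq_or_lt_of_le (Nat.succ_le_of_lt hk) with hk1 | hk1
      · -- k = n+1 : hasseDeriv k q has natDegree ≤ 0
        have hnd : (hasseDeriv k q).natDegree ≤ 0 := by
          refine le_trans (natDegree_hasseDeriv_le q k) ?_
          omega
        have hC : hasseDeriv k q = C ((hasseDeriv k q).coeff 0) :=
          Polynomial.eq_C_of_natDegree_le_zero hnd
        have : r.coeff k = (hasseDeriv k q).eval 1 - q.coeff k := by
          simp [hr, taylor_coeff]
        rw [this, hC]
        rw [eval_C, hasseDeriv_coeff]
        simp [← hk1]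
      · -- k > n+1 : both coeffs vanish
        have hnd : (hasseDeriv k q).natDegree ≤ 0 := by
          refine le_trans (natDegree_hasseDeriv_le q k) ?_
          omega
        have hC : hasseDeriv k q = C ((hasseDeriv k q).coeff 0) :=
          Polynomial.eq_C_of_natDegree_le_zero hnd
        have hqk : q.coeff k = 0 := coeff_eq_zero_of_natDegree_lt (by omega)
        have hqk' : q.coeff (0 + k) = 0 := by simpa using hqk
        have : r.coeff k = (hasseDeriv k q).eval 1 - q.coeff k := by
          simp [hr, taylor_coeff]
        rw [this, hC, eval_C, hasseDeriv_coeff, hqk', hqk]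
        simp
    have hdr : r.degree ≤ (n : WithBot ℕ) := by
      rw [Polynomial.degree_le_iff_coeff_zero]
      intro m hm
      exact hhigh m (by exact_mod_cast hm)
    -- coeff n of r equals (n+1) * q.coeff (n+1)
    have hcoeff : r.coeff n = ((n + 1 : ℕ) : R) * q.coeff (n + 1) := by
      have hnd : (hasseDeriv n q).natDegree ≤ 1 := by
        refine le_trans (natDegree_hasseDeriv_le q n) ?_
        omega
      have hC : hasseDeriv n q =
          C ((hasseDeriv n q).coeff 1) * X + C ((hasseDeriv n q).coeff 0) :=
        Polynomial.eq_X_add_C_of_degree_le_one (degree_le_of_natDegree_le hnd)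
      have h0 : (hasseDeriv n q).coeff 0 = q.coeff n := by
        rw [hasseDeriv_coeff]; simp
      have h1 : (hasseDeriv n q).coeff 1 = ((n + 1 : ℕ) : R) * q.coeff (n + 1) := by
        rw [hasseDeriv_coeff]
        congr 1
        · norm_cast
          rw [Nat.add_comm 1 n, Nat.choose_succ_self_right]
        · ring_nf
      have : r.coeff n = (hasseDeriv n q).eval 1 - q.coeff n := by
        simp [hr, taylor_coeff]
      rw [this, hC]
      simp [h0, h1]
    have := ih r hdr hev'
    rw [hcoeff] at this
    have : ((n.factorial : R) * ((n + 1 : ℕ) : R)) * q.coeff (n + 1) = 0 := by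
      rw [mul_assoc]; exact this
    calc ((n + 1).factorial : R) * q.coeff (n + 1)
        = ((n.factorial : R) * ((n + 1 : ℕ) : R)) * q.coeff (n + 1) := by
          rw [Nat.factorial_succ]; push_cast; ring
      _ = 0 := this

/-- Let `R` be a commutative ring with unit and `R'` the subring
generated by `1` (the prime subring, `⊥ : Subring R`). If there are `n : ℕ`
and a polynomial `p ∈ R[x]` with `deg p < n` such that `p(x) = x^n` for all
`x ∈ R` (in particular if `n = s(R) < ∞`), then `R'` is finite and `|R'|`
divides `n!`. -/
theorem stmt_4 (R : Type*) [CommRing R] (n : ℕ)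
    (h : ∃ p : Polynomial R,
        p.degree < (n : WithBot ℕ) ∧ ∀ x : R, p.eval x = x ^ n) :
    Finite (⊥ : Subring R) ∧ Nat.card (⊥ : Subring R) ∣ n.factorial := by
  obtain ⟨p, hdp, hev⟩ := h
  -- q = X^n - p is monic of degree ≤ n and vanishes everywhere
  set q : Polynomial R := X ^ n - p with hq
  have hdeg : q.degree ≤ (n : WithBot ℕ) := by
    refine le_trans (degree_sub_le _ _) ?_
    exact max_le (degree_X_pow_le n) (le_of_lt hdp)
  have hcoeff : q.coeff n = 1 := by
    have hpn : p.coeff n = 0 := coeff_eq_zero_of_degree_lt hdp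
    simp [hq, hpn, coeff_X_pow]
  have hev' : ∀ x : R, q.eval x = 0 := by
    intro x; simp [hq, hev x]
  have hfact : (n.factorial : R) = 0 := by
    have := key_factorial_coeff R n q hdeg hev'
    rwa [hcoeff, mul_one] at this
  -- so the characteristic divides n!
  set m := ringChar R with hm
  have hchar : CharP R m := ringChar.charP R
  have hdvd : m ∣ n.factorial := (CharP.cast_eq_zero_iff R m n.factorial).mp hfact
  have hm0 : m ≠ 0 := by
    intro h0
    rw [h0] at hdvd
    exact (Nat.factorial_ne_zero n) (Nat.eq_zero_of_zero_dvd hdvd)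
  haveI : NeZero m := ⟨hm0⟩
  -- ⊥ is the range of the ring hom from ZMod m
  set f : ZMod m →+* R := ZMod.castHom (dvd_refl m) R with hf
  have hinj : Function.Injective f := ZMod.castHom_injective R
  have hrange : f.range = (⊥ : Subring R) := by
    apply le_antisymm ?_ bot_le
    rintro x ⟨y, rfl⟩
    obtain ⟨k, rfl⟩ := ZMod.natCast_zmod_surjective (n := m) y
    rw [Subring.mem_bot]
    exact ⟨(k : ℤ), by push_cast; simp⟩
  have hcard : Nat.card (⊥ : Subring R) = m := by
    rw [← hrange]
    have : Nat.card f.range = Nat.card (Set.range f) := rfl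
    rw [this, Nat.card_range_of_injective hinj, Nat.card_zmod]
  constructor
  · rw [← hrange]
    have : Finite (Set.range f) := Set.finite_range f |>.to_subtype
    exact this
  · rw [hcard]; exact hdvd
end

section
/- Let R be a commutative ring with unit element and suppose there exist n ∈ ℕ and coefficients a₀, …, a_{n−1} ∈ R such that u^n = ∑_{i=0}^{n−1} a_i u^i for all u ∈ R (in particular if n = s(R) < ∞). Then with Λ := (n!)^{(2n)^n · n}, every element u ∈ R satisfies |{u^k : k ∈ ℕ, k ≥ 1}| ≤ Λ, i.e., the multiplicative orbit of every element of R has cardinality at most Λ. -/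
open Finset

private def Sd (n m : ℕ) : ℤ := ∑ j ∈ Finset.range (n+1), (-1:ℤ)^j * (n.choose j) * (j:ℤ)^m

private lemma Sd_rec (N m : ℕ) :
    Sd (N+1) m = - ∑ r ∈ Finset.range m, (m.choose r : ℤ) * Sd N r := by
  set f : ℕ → ℤ := fun j => (-1:ℤ)^j * (N.choose j) * (j:ℤ)^m with hf
  have hT1 : ∑ j ∈ Finset.range (N+2), f j = Sd N m := by
    rw [Finset.sum_range_succ]
    simp [Sd, hf, Nat.choose_eq_zero_of_lt (Nat.lt_succ_self N)]
  have hT2 : ∑ j ∈ Finset.range (N+2), f j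
      = ∑ i ∈ Finset.range (N+1), f (i+1) + f 0 := Finset.sum_range_succ' f (N+1)
  have hB : ∑ i ∈ Finset.range (N+1), (-1:ℤ)^i * (N.choose (i+1)) * ((i:ℤ)+1)^m
      = (0:ℤ)^m - Sd N m := by
    have hneg : ∑ i ∈ Finset.range (N+1), (-1:ℤ)^i * (N.choose (i+1)) * ((i:ℤ)+1)^m
        = - ∑ i ∈ Finset.range (N+1), f (i+1) := by
      rw [← Finset.sum_neg_distrib]
      refine Finset.sum_congr rfl fun i _ => ?_
      simp only [hf]
      push_cast
      ring
    have hf0 : f 0 = (0:ℤ)^m := by simp [hf]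
    have := hT2.symm.trans hT1
    linarith
  -- expand (i+1)^m by binomial theorem
  have hA : ∑ i ∈ Finset.range (N+1), (-1:ℤ)^i * (N.choose i) * ((i:ℤ)+1)^m
      = ∑ r ∈ Finset.range (m+1), (m.choose r : ℤ) * Sd N r := by
    have hbin : ∀ i : ℕ, ((i:ℤ)+1)^m = ∑ r ∈ Finset.range (m+1), (i:ℤ)^r * (m.choose r) := by
      intro i
      rw [add_pow]
      exact Finset.sum_congr rfl fun r _ => by ring
    calc ∑ i ∈ Finset.range (N+1), (-1:ℤ)^i * (N.choose i) * ((i:ℤ)+1)^m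
        = ∑ i ∈ Finset.range (N+1), ∑ r ∈ Finset.range (m+1),
            (m.choose r : ℤ) * ((-1:ℤ)^i * (N.choose i) * (i:ℤ)^r) := by
          refine Finset.sum_congr rfl fun i _ => ?_
          rw [hbin i, Finset.mul_sum]
          exact Finset.sum_congr rfl fun r _ => by ring
      _ = ∑ r ∈ Finset.range (m+1), (m.choose r : ℤ) * Sd N r := by
          rw [Finset.sum_comm]
          exact Finset.sum_congr rfl fun r _ => by rw [Sd, Finset.mul_sum]
  -- now expand Sd (N+1) m using Pascal
  have hS : Sd (N+1) m
      = -(∑ i ∈ Finset.range (N+1), (-1:ℤ)^i * (N.choose i) * ((i:ℤ)+1)^m)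
        + -(∑ i ∈ Finset.range (N+1), (-1:ℤ)^i * (N.choose (i+1)) * ((i:ℤ)+1)^m)
        + (0:ℤ)^m := by
    rw [Sd, Finset.sum_range_succ' (fun j => (-1:ℤ)^j * ((N+1).choose j) * (j:ℤ)^m) (N+1)]
    congr 1
    · calc ∑ i ∈ Finset.range (N+1), (-1:ℤ)^(i+1) * ((N+1).choose (i+1)) * (((i+1:ℕ)):ℤ)^m
          = ∑ i ∈ Finset.range (N+1),
              (-((-1:ℤ)^i * (N.choose i) * ((i:ℤ)+1)^m)
                + -((-1:ℤ)^i * (N.choose (i+1)) * ((i:ℤ)+1)^m)) := by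
            refine Finset.sum_congr rfl fun i _ => ?_
            rw [Nat.choose_succ_succ]
            push_cast
            ring
        _ = _ := by
            rw [Finset.sum_add_distrib, ← Finset.sum_neg_distrib, ← Finset.sum_neg_distrib]
    · simp
  have hpeel : ∑ r ∈ Finset.range (m+1), (m.choose r : ℤ) * Sd N r
      = ∑ r ∈ Finset.range m, (m.choose r : ℤ) * Sd N r + Sd N m := by
    rw [Finset.sum_range_succ]
    simp
  rw [hS, hB, hA, hpeel]
  ring

private lemma Sd_eq : ∀ n : ℕ, ∀ m ≤ n, Sd n m = if m = n then (-1:ℤ)^n * n.factorial else 0 := by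
  intro n
  induction n with
  | zero =>
    intro m hm
    interval_cases m
    simp [Sd]
  | succ N IH =>
    intro m hm
    rw [Sd_rec]
    by_cases hmn : m = N + 1
    · subst hmn
      rw [Finset.sum_range_succ]
      have hz : ∑ r ∈ Finset.range N, ((N+1).choose r : ℤ) * Sd N r = 0 := by
        refine Finset.sum_eq_zero fun r hr => ?_
        rw [IH r (le_of_lt (Finset.mem_range.mp hr)), if_neg (Nat.ne_of_lt (Finset.mem_range.mp hr))]
        ring
      rw [hz, IH N le_rfl, if_pos rfl, if_pos rfl]
      simp [Nat.choose_succ_self_right, Nat.factorial_succ]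
      ring
    · have hmN : m ≤ N := by omega
      rw [if_neg hmn]
      have hz : ∑ r ∈ Finset.range m, (m.choose r : ℤ) * Sd N r = 0 := by
        refine Finset.sum_eq_zero fun r hr => ?_
        have hrm : r < m := Finset.mem_range.mp hr
        rw [IH r (by omega), if_neg (by omega)]
        ring
      rw [hz, neg_zero]

private lemma char_lemma {R : Type*} [CommRing R] (n : ℕ) (a : Fin n → R)
    (h : ∀ u : R, u ^ n = ∑ i : Fin n, a i * u ^ (i : ℕ)) :
    (n.factorial : R) = 0 := by
  have key : ∀ m : ℕ, ((Sd n m : ℤ) : R)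
      = ∑ j ∈ Finset.range (n+1), (-1:R)^j * (n.choose j) * ((j:ℕ):R)^m := by
    intro m
    rw [Sd]
    push_cast
    rfl
  have h1 : ((Sd n n : ℤ) : R) = 0 := by
    rw [key]
    calc ∑ j ∈ Finset.range (n+1), (-1:R)^j * (n.choose j) * ((j:ℕ):R)^n
        = ∑ j ∈ Finset.range (n+1), ∑ i : Fin n,
            a i * ((-1:R)^j * (n.choose j) * ((j:ℕ):R)^(i:ℕ)) := by
          refine Finset.sum_congr rfl fun j _ => ?_
          rw [h (((j:ℕ):R))]
          rw [Finset.mul_sum]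
          refine Finset.sum_congr rfl fun i _ => ?_
          ring
      _ = ∑ i : Fin n, a i * ∑ j ∈ Finset.range (n+1), (-1:R)^j * (n.choose j) * ((j:ℕ):R)^(i:ℕ) := by
          rw [Finset.sum_comm]
          refine Finset.sum_congr rfl fun i _ => ?_
          rw [Finset.mul_sum]
      _ = 0 := by
          refine Finset.sum_eq_zero fun i _ => ?_
          rw [← key (i:ℕ), Sd_eq n (i:ℕ) (le_of_lt i.isLt), if_neg (Nat.ne_of_lt i.isLt)]
          simp
  rw [Sd_eq n n le_rfl, if_pos rfl] at h1
  push_cast at h1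
  have h2 : ((-1:R)^n) * ((-1:R)^n * (n.factorial : R)) = (n.factorial : R) := by
    rw [← mul_assoc, ← mul_pow]
    simp
  rw [← h2, h1, mul_zero]

private lemma prod_count {R : Type*} [CommRing R] {n : ℕ} (a : Fin n → R) (s : Multiset (Fin n)) :
    (s.map a).prod = ∏ i : Fin n, a i ^ s.count i := by
  induction s using Multiset.induction with
  | empty => simp
  | cons b s ih =>
    rw [Multiset.map_cons, Multiset.prod_cons, ih]
    have : ∀ i : Fin n, a i ^ (b ::ₘ s).count i
        = a i ^ s.count i * (if i = b then a i else 1) := by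
      intro i
      rw [Multiset.count_cons, pow_add]
      congr 1
      split <;> simp
    rw [Finset.prod_congr rfl fun i _ => this i, Finset.prod_mul_distrib]
    simp [mul_comm]

/-- Suppose `R` is a commutative ring with unit, `n : ℕ` and
`a₀, …, a_{n-1} ∈ R` satisfy `u^n = ∑_{i<n} aᵢ uⁱ` for all `u ∈ R`
(in particular if `n = s(R) < ∞`). Then with `Λ := (n!)^((2n)^n · n)`,
the multiplicative orbit `{u^k : k ≥ 1}` of every `u ∈ R` is finite of
cardinality at most `Λ`. -/
theorem stmt_5 (R : Type*) [CommRing R] (n : ℕ) (a : Fin n → R)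
    (h : ∀ u : R, u ^ n = ∑ i : Fin n, a i * u ^ (i : ℕ)) :
    ∀ u : R, {v : R | ∃ k : ℕ, 1 ≤ k ∧ v = u ^ k}.Finite ∧
      {v : R | ∃ k : ℕ, 1 ≤ k ∧ v = u ^ k}.ncard
        ≤ n.factorial ^ ((2 * n) ^ n * n) := by
  intro u
  classical
  set m0 := n.factorial with hm0def
  have hm0 : 0 < m0 := n.factorial_pos
  have hchar : (m0 : R) = 0 := char_lemma n a h
  set g : ((Fin n → Fin (2*n)) × Fin n) → R :=
    fun p => (∏ i : Fin n, a i ^ ((p.1 i : ℕ))) * u ^ ((p.2 : ℕ)) with hg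
  set N : Submodule ℤ R := Submodule.span ℤ (Set.range g) with hN
  have lemA : ∀ d : ℕ, ∀ s : Multiset (Fin n), Multiset.card s ≤ d →
      ∀ j : ℕ, j < n → (s.map a).prod * u ^ j ∈ N := by
    intro d
    induction d using Nat.strong_induction_on with
    | _ d IH =>
      intro s hs j hj
      by_cases hb : ∀ i : Fin n, s.count i < 2*n
      · apply Submodule.subset_span
        exact ⟨(fun i => ⟨s.count i, hb i⟩, ⟨j, hj⟩), by simp [hg, prod_count a s]⟩
      · push_neg at hb
        obtain ⟨i0, hi0⟩ := hb
        have hle : Multiset.replicate (2*n) i0 ≤ s := by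
          rw [Multiset.le_iff_count]
          intro i
          rw [Multiset.count_replicate]
          split
          · next heq => exact heq ▸ hi0
          · exact Nat.zero_le _
        set s' := s - Multiset.replicate (2*n) i0 with hs'
        have hsum : s' + Multiset.replicate (2*n) i0 = s := tsub_add_cancel_of_le hle
        have hcard : Multiset.card s' + 2*n = Multiset.card s := by
          conv_rhs => rw [← hsum]
          simp
        have hprod : (s.map a).prod = a i0 ^ (2*n) * (s'.map a).prod := by
          conv_lhs => rw [← hsum]
          rw [Multiset.map_add, Multiset.prod_add, Multiset.map_replicate, Multiset.prod_replicate]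
          ring
        have hred : a i0 ^ (2*n) = ∑ m : Fin n, a m * a i0 ^ (2*(m:ℕ)) := by
          have h2 : a i0 ^ (2*n) = (a i0 ^ 2) ^ n := by rw [← pow_mul]
          rw [h2, h (a i0 ^ 2)]
          exact Finset.sum_congr rfl fun m _ => by rw [← pow_mul]
        have hexp : (s.map a).prod * u ^ j
            = ∑ m : Fin n, ((m ::ₘ (Multiset.replicate (2*(m:ℕ)) i0 + s')).map a).prod * u ^ j := by
          rw [hprod, hred, Finset.sum_mul, Finset.sum_mul]
          refine Finset.sum_congr rfl fun m _ => ?_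
          rw [Multiset.map_cons, Multiset.prod_cons, Multiset.map_add, Multiset.prod_add,
            Multiset.map_replicate, Multiset.prod_replicate]
          ring
        rw [hexp]
        refine Submodule.sum_mem _ fun m _ => ?_
        have h1 : 2*n ≤ Multiset.card s := le_trans hi0 (Multiset.count_le_card i0 s)
        have h2 : (m:ℕ) < n := m.isLt
        have hcnew : Multiset.card (m ::ₘ (Multiset.replicate (2*(m:ℕ)) i0 + s')) < d := by
          rw [Multiset.card_cons, Multiset.card_add, Multiset.card_replicate]
          omega
        exact IH _ hcnew _ le_rfl j hj
  have lemB : ∀ j : ℕ, ∀ s : Multiset (Fin n), (s.map a).prod * u ^ j ∈ N := by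
    intro j
    induction j using Nat.strong_induction_on with
    | _ j IH =>
      intro s
      by_cases hj : j < n
      · exact lemA (Multiset.card s) s le_rfl j hj
      · push_neg at hj
        have hu : u ^ j = (∑ m : Fin n, a m * u ^ (m:ℕ)) * u ^ (j - n) := by
          rw [← h u, ← pow_add]
          congr 1
          omega
        have hexp : (s.map a).prod * u ^ j
            = ∑ m : Fin n, ((m ::ₘ s).map a).prod * u ^ ((m:ℕ) + (j - n)) := by
          rw [hu, Finset.sum_mul, Finset.mul_sum]
          refine Finset.sum_congr rfl fun m _ => ?_
          rw [Multiset.map_cons, Multiset.prod_cons, pow_add]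
          ring
        rw [hexp]
        refine Submodule.sum_mem _ fun m _ => ?_
        have hlt : (m:ℕ) + (j - n) < j := by have := m.isLt; omega
        exact IH _ hlt _
  have horbit : ∀ k : ℕ, u ^ k ∈ N := by
    intro k
    have := lemB k 0
    simpa using this
  set φ : (((Fin n → Fin (2*n)) × Fin n) → Fin m0) → R :=
    fun c => ∑ i, ((c i : ℕ) : ℤ) • g i with hφ
  have hNsub : ∀ x ∈ N, x ∈ Set.range φ := by
    intro x hx
    rw [hN, Submodule.mem_span_range_iff_exists_fun] at hx
    obtain ⟨c, hc⟩ := hx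
    have h1 : (0:ℤ) < m0 := by exact_mod_cast hm0
    refine ⟨fun i => ⟨((c i) % (m0:ℤ)).toNat, ?_⟩, ?_⟩
    · have hlt := Int.emod_lt_of_pos (c i) h1
      have h2 := Int.emod_nonneg (c i) (ne_of_gt h1)
      omega
    · rw [hφ, ← hc]
      refine Finset.sum_congr rfl fun i _ => ?_
      have h2 := Int.emod_nonneg (c i) (ne_of_gt h1)
      simp only
      rw [Int.toNat_of_nonneg h2]
      have hsplit : c i • g i = (c i % (m0:ℤ) + (m0:ℤ) * (c i / (m0:ℤ))) • g i := by
        rw [Int.emod_add_mul_ediv]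
      rw [hsplit, add_smul, mul_smul]
      have hz : ∀ y : R, ((m0:ℕ):ℤ) • y = 0 := fun y => by
        rw [zsmul_eq_mul]
        push_cast
        rw [hchar, zero_mul]
      rw [hz, add_zero]
  have hsub : {v : R | ∃ k : ℕ, 1 ≤ k ∧ v = u ^ k} ⊆ Set.range φ := by
    rintro v ⟨k, hk, rfl⟩
    exact hNsub _ (horbit k)
  have hfin : (Set.range φ).Finite := Set.finite_range φ
  refine ⟨hfin.subset hsub, ?_⟩
  calc {v : R | ∃ k : ℕ, 1 ≤ k ∧ v = u ^ k}.ncard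
      ≤ (Set.range φ).ncard := Set.ncard_le_ncard hsub hfin
    _ ≤ Fintype.card ((((Fin n → Fin (2*n)) × Fin n)) → Fin m0) := by
        rw [← Set.image_univ]
        refine le_trans (Set.ncard_image_le Set.finite_univ) ?_
        rw [Set.ncard_univ]
        exact le_of_eq Nat.card_eq_fintype_card
    _ ≤ n.factorial ^ ((2 * n) ^ n * n) := by
        rw [Fintype.card_fun]
        simp [hm0def]
end

section
/- Let R be a commutative ring with unit element, let R' be the subring of R generated by 1, and suppose n := s(R) < ∞, i.e., there exists a polynomial p ∈ R[x] with deg p < n representing x ↦ x^n on R. Then s(R'; R) ≤ lcm(Λ) + Λ, where Λ := (n!)^{(2n)^n · n} and lcm(Λ) denotes the least common multiple of the numbers 1, 2, …, Λ. Concretely, u^{lcm(Λ)+Λ} = u^Λ holds for all u ∈ R, so the monomial x^{lcm(Λ)+Λ} is represented on R by a polynomial with coefficients in R' of strictly smaller degree. -/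
/-!
Write `x ^ n = ∑_{m < n} a m * x ^ m` on `R`. Taking `n`-th forward differences of both sides
gives `n ! = 0` in `R`. For `u : R`, the rewriting rules `u ^ n = ∑ a m * u ^ m` and
`a j ^ (2n) = (a j ^ 2) ^ n = ∑ a m * a j ^ (2m)` strictly decrease the degree of a monomial in
`u, a 0, …, a (n-1)` weighted by `2` for `u` and `1` for each `a j`. Hence every power of `u` is
an `ℕ`-combination of the `n * (2n) ^ n` monomials with `u`-exponent `< n` and `a j`-exponents
`< 2n`, with coefficients that only matter modulo `n !`; so the powers of `u` take at most
`Λ = n ! ^ ((2n) ^ n * n)` values. By pigeonhole `u ^ j = u ^ i` for some `i < j ≤ Λ`, and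
`j - i` divides `lcm(1, …, Λ)`.
-/

open Finset Matrix Polynomial Nat

section WeightedMonomials

variable {R ι : Type*} [CommSemiring R] [Fintype ι]

theorem prod_pow_add_apply (x : ι → R) (e f : ι → ℕ) :
    ∏ i, x i ^ (e + f) i = (∏ i, x i ^ e i) * ∏ i, x i ^ f i := by
  simp only [Pi.add_apply, pow_add, prod_mul_distrib]

theorem prod_pow_single_apply [DecidableEq ι] (x : ι → R) (i : ι) (k : ℕ) :
    ∏ j, x j ^ (Pi.single i k : ι → ℕ) j = x i ^ k := by
  simp only [Pi.single_apply, pow_ite, pow_zero, prod_ite_eq', mem_univ, if_true]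

theorem prod_pow_mem_closure_range_of_pow_mem (x : ι → R) (wt d : ι → ℕ)
    (hred : ∀ i, x i ^ d i ∈ AddSubmonoid.closure
      {y | ∃ e : ι → ℕ, wt ⬝ᵥ e < wt i * d i ∧ y = ∏ j, x j ^ e j})
    (e : ι → ℕ) :
    ∏ i, x i ^ e i ∈ AddSubmonoid.closure
      (Set.range fun c : (∀ i, Fin (d i)) => ∏ i, x i ^ (c i : ℕ)) := by
  classical
  induction hW : wt ⬝ᵥ e using Nat.strong_induction_on generalizing e with
  | _ W ih =>
  by_cases hsmall : ∀ i, e i < d i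
  · exact AddSubmonoid.subset_closure ⟨fun i => ⟨e i, hsmall i⟩, rfl⟩
  push Not at hsmall
  obtain ⟨i, hi⟩ := hsmall
  set e' := Function.update e i (e i - d i)
  have he : e = Pi.single i (d i) + e' := by
    ext j
    rcases eq_or_ne j i with rfl | hj
    · simp [e']; omega
    · simp [e', hj]
  have hsplit : ∏ j, x j ^ e j = x i ^ d i * ∏ j, x j ^ e' j := by
    rw [he, prod_pow_add_apply, prod_pow_single_apply]
  rw [hsplit]
  refine (AddSubmonoid.closure_le (S := (AddSubmonoid.closure _).comap
    (AddMonoidHom.mulRight (∏ j, x j ^ e' j)))).mpr ?_ (hred i)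
  rintro _ ⟨f, hf, rfl⟩
  have hlt : wt ⬝ᵥ (f + e') < W := by
    rw [← hW, he, dotProduct_add, dotProduct_add, dotProduct_single]
    omega
  rw [SetLike.mem_coe, AddSubmonoid.mem_comap, AddMonoidHom.mulRight_apply,
    ← prod_pow_add_apply]
  exact ih _ hlt _ rfl

end WeightedMonomials

theorem AddSubmonoid.closure_range_subset_range_sum_fin {G ι : Type*} [AddCommMonoid G]
    [Fintype ι] (w : ι → G) {N : ℕ} [NeZero N] (htors : ∀ y : G, N • y = 0) :
    (AddSubmonoid.closure (Set.range w) : Set G) ⊆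
      Set.range fun c : ι → Fin N => ∑ i, (c i : ℕ) • w i := by
  intro y hy
  obtain ⟨a, rfl⟩ := AddSubmonoid.mem_closure_range_iff_of_fintype.mp (SetLike.mem_coe.mp hy)
  exact ⟨fun i => ⟨a i % N, Nat.mod_lt _ (NeZero.pos N)⟩,
    sum_congr rfl fun i _ => (nsmul_eq_mod_nsmul (a i) (htors (w i))).symm⟩

theorem pow_add_mul_eq_pow {M : Type*} [Monoid M] {u : M} {i d : ℕ} (h : u ^ (i + d) = u ^ i)
    (k : ℕ) : u ^ (i + d * k) = u ^ i := by
  induction k with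
  | zero => simp
  | succ k ih => rw [Nat.mul_succ, ← add_assoc, pow_add, ih, ← pow_add, h]

theorem pow_lcm_Icc_add_eq_pow {M : Type*} [Monoid M] (u : M) (S : Set M) [Finite S] {Λ : ℕ}
    (hS : Nat.card S ≤ Λ) (hu : ∀ k, u ^ k ∈ S) :
    u ^ ((Icc 1 Λ).lcm id + Λ) = u ^ Λ := by
  obtain ⟨i, j, hij, hjΛ, hrep⟩ : ∃ i j : ℕ, i < j ∧ j ≤ Λ ∧ u ^ j = u ^ i := by
    have hnotinj : ¬ Function.Injective fun k : Fin (Λ + 1) => (⟨u ^ (k : ℕ), hu k⟩ : S) :=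
      fun hinj => by simpa using (Nat.card_le_card_of_injective _ hinj).trans hS
    obtain ⟨k, l, hkl, hne⟩ := Function.not_injective_iff.mp hnotinj
    have hkl : u ^ (k : ℕ) = u ^ (l : ℕ) := congrArg Subtype.val hkl
    rcases Fin.lt_or_lt_of_ne hne with h | h
    · exact ⟨k, l, h, by omega, hkl.symm⟩
    · exact ⟨l, k, h, by omega, hkl⟩
  obtain ⟨c, hc⟩ : j - i ∣ (Icc 1 Λ).lcm id :=
    dvd_lcm (f := id) (mem_Icc.mpr ⟨by omega, by omega⟩)
  have hper : u ^ (i + (j - i)) = u ^ i := by rwa [Nat.add_sub_cancel' hij.le]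
  calc u ^ ((Icc 1 Λ).lcm id + Λ) = u ^ (Λ - i) * u ^ (i + (j - i) * c) := by
        rw [← pow_add, hc]; congr 1; omega
    _ = u ^ Λ := by rw [pow_add_mul_eq_pow hper, ← pow_add]; congr 1; omega

theorem factorial_eq_zero_of_pow_eq_sum {R : Type*} [CommRing R] {n : ℕ} (a : ℕ → R)
    (h : ∀ x : R, x ^ n = ∑ m ∈ range n, a m * x ^ m) : (n ! : R) = 0 := by
  have hfd := fwdDiff_iter_eq_factorial (R := R) (n := n)
  rw [funext h, fwdDiff_iter_sum_mul_pow_eq_zero] at hfd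
  simpa using (congrFun hfd 0).symm

theorem pow_eq_sum_coeff_mul_pow {R : Type*} [CommRing R] {n : ℕ} {p : R[X]}
    (hdeg : p.degree < n) (hp : ∀ x, p.eval x = x ^ n) (x : R) :
    x ^ n = ∑ m ∈ range n, p.coeff m * x ^ m := by
  rw [← hp]
  rcases eq_or_ne p 0 with rfl | hp0
  · simp
  · exact eval_eq_sum_range' ((natDegree_lt_iff_degree_lt hp0).mpr hdeg) x

theorem pow_lcm_add_eq_pow_of_pow_eq_sum {R : Type*} [CommRing R] {n : ℕ} (a : ℕ → R)
    (h : ∀ x : R, x ^ n = ∑ m ∈ range n, a m * x ^ m) (u : R) :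
    u ^ ((Icc 1 (n ! ^ ((2 * n) ^ n * n))).lcm id + n ! ^ ((2 * n) ^ n * n))
      = u ^ (n ! ^ ((2 * n) ^ n * n)) := by
  classical
  let x : Option (Fin n) → R := fun i => i.elim u fun j => a j
  let wt : Option (Fin n) → ℕ := fun i => i.elim 2 fun _ => 1
  let d : Option (Fin n) → ℕ := fun i => i.elim n fun _ => 2 * n
  have hterm : ∀ i i' (m : Fin n) k, 1 + wt i * k < wt i' * d i' →
      a m * x i ^ k ∈ AddSubmonoid.closure
        {y | ∃ e, wt ⬝ᵥ e < wt i' * d i' ∧ y = ∏ j, x j ^ e j} := by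
    intro i i' m k hk
    refine AddSubmonoid.subset_closure ⟨Pi.single (some m) 1 + Pi.single i k, ?_, ?_⟩
    · simpa [dotProduct_add, dotProduct_single, wt] using hk
    · rw [prod_pow_add_apply, prod_pow_single_apply, prod_pow_single_apply, pow_one]
      rfl
  have hred : ∀ i, x i ^ d i ∈ AddSubmonoid.closure
      {y | ∃ e, wt ⬝ᵥ e < wt i * d i ∧ y = ∏ j, x j ^ e j} := by
    rintro (_ | j)
    · show u ^ n ∈ _
      rw [h u]
      exact AddSubmonoid.sum_mem _ fun m hm =>
        hterm none none ⟨m, mem_range.mp hm⟩ m (by simp [wt, d]; have := mem_range.mp hm; omega)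
    · show a j ^ (2 * n) ∈ _
      rw [pow_mul, h]
      simp_rw [← pow_mul]
      exact AddSubmonoid.sum_mem _ fun m hm =>
        hterm (some j) (some j) ⟨m, mem_range.mp hm⟩ (2 * m)
          (by simp [wt, d]; have := mem_range.mp hm; omega)
  have hpow : ∀ k, u ^ k ∈ AddSubmonoid.closure
      (Set.range fun c : (∀ i, Fin (d i)) => ∏ i, x i ^ (c i : ℕ)) := fun k => by
    simpa [prod_pow_single_apply, x] using
      prod_pow_mem_closure_range_of_pow_mem x wt d hred (Pi.single none k)
  have htors : ∀ y : R, n ! • y = 0 := fun y => by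
    rw [nsmul_eq_mul, factorial_eq_zero_of_pow_eq_sum a h, zero_mul]
  have : NeZero n ! := ⟨factorial_ne_zero n⟩
  have hgen := AddSubmonoid.closure_range_subset_range_sum_fin
    (fun c : (∀ i, Fin (d i)) => ∏ i, x i ^ (c i : ℕ)) htors
  refine pow_lcm_Icc_add_eq_pow u _ ((Finite.card_range_le _).trans ?_) fun k => hgen (hpow k)
  simp [Fintype.prod_option, d, mul_comm]

theorem stmt_6_general (R : Type*) [CommRing R] (n : ℕ)
    (hfin : ∃ p : Polynomial R,
        p.degree < (n : WithBot ℕ) ∧ ∀ x : R, p.eval x = x ^ n) :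
    (∀ u : R,
        u ^ ((Finset.Icc 1 (n.factorial ^ ((2 * n) ^ n * n))).lcm id
              + n.factorial ^ ((2 * n) ^ n * n))
          = u ^ (n.factorial ^ ((2 * n) ^ n * n))) ∧
    sInf {m : ℕ | ∃ p : Polynomial R,
        (∀ i, p.coeff i ∈ (⊥ : Subring R)) ∧
        p.degree < (m : WithBot ℕ) ∧ ∀ x : R, p.eval x = x ^ m}
      ≤ (Finset.Icc 1 (n.factorial ^ ((2 * n) ^ n * n))).lcm id
          + n.factorial ^ ((2 * n) ^ n * n) := by
  obtain ⟨p, hdeg, hp⟩ := hfin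
  have hpow := pow_lcm_add_eq_pow_of_pow_eq_sum _ (pow_eq_sum_coeff_mul_pow hdeg hp)
  refine ⟨hpow, Nat.sInf_le ⟨X ^ n ! ^ ((2 * n) ^ n * n), fun i => ?_, ?_, fun u => ?_⟩⟩
  · rw [coeff_X_pow]
    split_ifs
    exacts [one_mem _, zero_mem _]
  · have hlcm : 0 < (Icc 1 (n ! ^ ((2 * n) ^ n * n))).lcm id :=
      Nat.pos_of_ne_zero (lcm_ne_zero_iff.mpr fun k hk => by simp at hk ⊢; omega)
    exact (degree_X_pow_le _).trans_lt (by exact_mod_cast Nat.lt_add_of_pos_left hlcm)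
  · rw [eval_pow, eval_X, hpow]

/-- Let `R` be a commutative ring with unit, `R' = ⊥ : Subring R`
the subring generated by `1`, and suppose `n := s(R) < ∞`, i.e. there is a
polynomial `p ∈ R[x]` with `deg p < n` and `p(x) = x^n` on `R`. With
`Λ := (n!)^((2n)^n · n)` and `L := lcm(1, 2, …, Λ)`, one has
`u^(L + Λ) = u^Λ` for all `u ∈ R`, and consequently
`s(R'; R) ≤ L + Λ`, where `s(R'; R)` is the least `m` such that `x ↦ x^m`
is represented on `R` by a polynomial with coefficients in `R'` of degree
`< m`. -/
theorem stmt_6 (R : Type*) [CommRing R] (n : ℕ)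
    (hn : n = sInf {m : ℕ | ∃ p : Polynomial R,
        p.degree < (m : WithBot ℕ) ∧ ∀ x : R, p.eval x = x ^ m})
    (hfin : ∃ p : Polynomial R,
        p.degree < (n : WithBot ℕ) ∧ ∀ x : R, p.eval x = x ^ n) :
    (∀ u : R,
        u ^ ((Finset.Icc 1 (n.factorial ^ ((2 * n) ^ n * n))).lcm id
              + n.factorial ^ ((2 * n) ^ n * n))
          = u ^ (n.factorial ^ ((2 * n) ^ n * n))) ∧
    sInf {m : ℕ | ∃ p : Polynomial R,
        (∀ i, p.coeff i ∈ (⊥ : Subring R)) ∧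
        p.degree < (m : WithBot ℕ) ∧ ∀ x : R, p.eval x = x ^ m}
      ≤ (Finset.Icc 1 (n.factorial ^ ((2 * n) ^ n * n))).lcm id
          + n.factorial ^ ((2 * n) ^ n * n) :=
  stmt_6_general R n hfin
end

section
/- Let R be a finite commutative ring with unit element containing two distinct nonzero elements a, b with ab = 0. Then the polynomial (x − a)(x − b)·∏_{z ∈ R \ {a, b, 0}} (x − z) is a monic null-polynomial of degree |R| − 1, i.e., it is monic of degree |R| − 1 and vanishes at every x ∈ R. Consequently s(R) < |R|. -/
/-- Let `R` be a finite commutative ring with unit containing two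
distinct nonzero elements `a, b` with `a * b = 0`. Then
`(x − a)(x − b) ∏_{z ∈ R \ {a,b,0}} (x − z)` is a monic null-polynomial of
degree `|R| − 1`; consequently `s(R) < |R|`. -/
theorem stmt_8 (R : Type*) [CommRing R] [Fintype R] [DecidableEq R]
    (a b : R) (ha : a ≠ 0) (hb : b ≠ 0) (hab : a ≠ b) (hmul : a * b = 0) :
    (((Polynomial.X - Polynomial.C a) * (Polynomial.X - Polynomial.C b) *
        ∏ z ∈ (Finset.univ \ {a, b, 0} : Finset R),
          (Polynomial.X - Polynomial.C z)).Monic ∧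
     ((Polynomial.X - Polynomial.C a) * (Polynomial.X - Polynomial.C b) *
        ∏ z ∈ (Finset.univ \ {a, b, 0} : Finset R),
          (Polynomial.X - Polynomial.C z)).degree = ((Fintype.card R - 1 : ℕ) : WithBot ℕ) ∧
     ∀ x : R,
       ((Polynomial.X - Polynomial.C a) * (Polynomial.X - Polynomial.C b) *
        ∏ z ∈ (Finset.univ \ {a, b, 0} : Finset R),
          (Polynomial.X - Polynomial.C z)).eval x = 0) ∧
    sInf {m : ℕ | ∃ p : Polynomial R,
        p.degree < (m : WithBot ℕ) ∧ ∀ x : R, p.eval x = x ^ m}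
      < Fintype.card R := by
  have hnt : Nontrivial R := ⟨a, 0, ha⟩
  set P : Polynomial R := (Polynomial.X - Polynomial.C a) * (Polynomial.X - Polynomial.C b) *
      ∏ z ∈ (Finset.univ \ {a, b, 0} : Finset R), (Polynomial.X - Polynomial.C z) with hP
  have hmonic : P.Monic := by
    refine ((Polynomial.monic_X_sub_C a).mul (Polynomial.monic_X_sub_C b)).mul ?_
    exact Polynomial.monic_prod_of_monic _ _ fun z _ => Polynomial.monic_X_sub_C z
  -- card of {a,b,0}
  have hcard3 : ({a, b, 0} : Finset R).card = 3 := by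
    rw [Finset.card_insert_of_notMem, Finset.card_insert_of_notMem, Finset.card_singleton]
    · simp [hb]
    · simp [ha, hab]
  have hsub : ({a, b, 0} : Finset R) ⊆ Finset.univ := Finset.subset_univ _
  have hcard_sdiff : (Finset.univ \ {a, b, 0} : Finset R).card = Fintype.card R - 3 := by
    rw [Finset.card_sdiff_of_subset hsub, hcard3, Finset.card_univ]
  have hcard_ge : 3 ≤ Fintype.card R := by
    calc 3 = ({a, b, 0} : Finset R).card := hcard3.symm
    _ ≤ Fintype.card R := by rw [← Finset.card_univ]; exact Finset.card_le_card hsub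
  have hnatdeg : P.natDegree = Fintype.card R - 1 := by
    rw [hP, Polynomial.Monic.natDegree_mul
        ((Polynomial.monic_X_sub_C a).mul (Polynomial.monic_X_sub_C b))
        (Polynomial.monic_prod_of_monic _ _ fun z _ => Polynomial.monic_X_sub_C z),
      Polynomial.Monic.natDegree_mul (Polynomial.monic_X_sub_C a) (Polynomial.monic_X_sub_C b),
      Polynomial.natDegree_prod_of_monic _ _ fun z _ => Polynomial.monic_X_sub_C z]
    simp only [Polynomial.natDegree_X_sub_C, Finset.sum_const, smul_eq_mul, mul_one]
    rw [hcard_sdiff]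
    omega
  have hdeg : P.degree = ((Fintype.card R - 1 : ℕ) : WithBot ℕ) := by
    rw [Polynomial.degree_eq_natDegree hmonic.ne_zero, hnatdeg]
  have heval : ∀ x : R, P.eval x = 0 := by
    intro x
    simp only [hP, Polynomial.eval_mul, Polynomial.eval_prod, Polynomial.eval_sub,
      Polynomial.eval_X, Polynomial.eval_C]
    by_cases hxa : x = a
    · simp [hxa]
    by_cases hxb : x = b
    · simp [hxb]
    by_cases hx0 : x = 0
    · subst hx0; rw [zero_sub, zero_sub, neg_mul_neg, hmul, zero_mul]
    · have hxmem : x ∈ (Finset.univ \ {a, b, 0} : Finset R) := by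
        simp [hxa, hxb, hx0]
      rw [Finset.prod_eq_zero hxmem (by simp), mul_zero]
  refine ⟨⟨hmonic, hdeg, heval⟩, ?_⟩
  have hmem : (Fintype.card R - 1) ∈ {m : ℕ | ∃ p : Polynomial R,
      p.degree < (m : WithBot ℕ) ∧ ∀ x : R, p.eval x = x ^ m} := by
    refine ⟨Polynomial.X ^ (Fintype.card R - 1) - P, ?_, ?_⟩
    · have := Polynomial.degree_sub_lt
        (p := Polynomial.X ^ (Fintype.card R - 1)) (q := P) ?_ ((Polynomial.monic_X_pow _).ne_zero) ?_
      · rwa [Polynomial.degree_X_pow] at this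
      · rw [Polynomial.degree_X_pow, hdeg]
      · rw [hmonic.leadingCoeff, Polynomial.monic_X_pow _ |>.leadingCoeff]
    · intro x
      simp [heval x]
  calc sInf _ ≤ Fintype.card R - 1 := Nat.sInf_le hmem
  _ < Fintype.card R := by omega
end

section
/- Let ρ be the four-element ring {0, 1, a, 1+a} with 1+1 = 0 and a² = 0, i.e., ρ = (ℤ/2ℤ)[X]/(X²), the dual numbers over ℤ/2ℤ. Then there is no monic polynomial p ∈ ρ[x] of degree 3 with p(u) = 0 for all u ∈ ρ. Consequently s(ρ) = 4 = |ρ|. -/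
open DualNumber TrivSqZeroExt Polynomial

theorem two_eq' : (2 : DualNumber (ZMod 2)) = 0 := by
  have h : (2 : DualNumber (ZMod 2)) = ((2 : ℕ) : DualNumber (ZMod 2)) := by norm_num
  rw [h, ← TrivSqZeroExt.inl_natCast, show ((2:ℕ) : ZMod 2) = 0 by decide]
  exact inl_zero _

theorem eps_ne' : (ε : DualNumber (ZMod 2)) ≠ 0 := by
  intro h
  have := congrArg TrivSqZeroExt.snd h
  simp at this

theorem part1' :
    ¬ ∃ p : Polynomial (DualNumber (ZMod 2)),
        p.Monic ∧ p.degree = 3 ∧ ∀ u : DualNumber (ZMod 2), p.eval u = 0 := by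
  rintro ⟨p, hm, hd, hz⟩
  have hnd : p.natDegree = 3 := natDegree_eq_of_degree_eq_some hd
  have hlead : p.coeff 3 = 1 := by
    have := hm.coeff_natDegree
    rwa [hnd] at this
  have hev : ∀ u : DualNumber (ZMod 2),
      p.coeff 0 + p.coeff 1 * u + p.coeff 2 * u ^ 2 + u ^ 3 = 0 := by
    intro u
    have h := hz u
    rw [eval_eq_sum_range, hnd] at h
    simp [Finset.sum_range_succ, hlead] at h
    linear_combination h
  have key : (ε : DualNumber (ZMod 2)) = 0 := by
    linear_combination (hev (1 + ε)) - (hev 1) - (hev ε) + (hev 0)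
      - (p.coeff 2 + 1) * ε * two_eq' - 3 * (eps_mul_eps (R := ZMod 2))
  exact eps_ne' key

/-- Let ρ be the four-element ring `{0, 1, a, 1+a}` with
`1 + 1 = 0` and `a² = 0`, i.e. the dual numbers over `ℤ/2ℤ`. Then there is no
monic polynomial of degree `3` over ρ vanishing at every element of ρ;
consequently `s(ρ) = 4 = |ρ|`. -/
theorem stmt_10 :
    (¬ ∃ p : Polynomial (DualNumber (ZMod 2)),
        p.Monic ∧ p.degree = 3 ∧ ∀ u : DualNumber (ZMod 2), p.eval u = 0) ∧
    sInf {m : ℕ | ∃ p : Polynomial (DualNumber (ZMod 2)),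
        p.degree < (m : WithBot ℕ) ∧ ∀ x : DualNumber (ZMod 2), p.eval x = x ^ m}
      = 4 ∧
    Nat.card (DualNumber (ZMod 2)) = 4 := by
  refine ⟨part1', ?_, ?_⟩
  · apply le_antisymm
    · -- 4 is a member via p = X^2
      apply Nat.sInf_le
      refine ⟨X ^ 2, ?_, ?_⟩
      · rw [degree_X_pow]; norm_num
      · intro x
        simp only [eval_pow, eval_X]
        ext
        · simp only [fst_pow]
          have : ∀ a : ZMod 2, a ^ 2 = a ^ 4 := by decide
          exact this x.fst
        · simp only [snd_pow]
          norm_num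
          have : ∀ a b : ZMod 2, 2 * (a * b) = 4 * (a^3 * b) := by decide
          exact this _ _
    · apply le_csInf
      · exact ⟨4, X ^ 2, by rw [degree_X_pow]; norm_num, by
          intro x
          simp only [eval_pow, eval_X]
          ext
          · simp only [fst_pow]
            have : ∀ a : ZMod 2, a ^ 2 = a ^ 4 := by decide
            exact this x.fst
          · simp only [snd_pow]
            norm_num
            have : ∀ a b : ZMod 2, 2 * (a * b) = 4 * (a^3 * b) := by decide
            exact this _ _⟩
      rintro m ⟨p, hd, hx⟩
      by_contra hlt
      push_neg at hlt
      interval_cases m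
      · -- m = 0
        have hp : p = 0 := degree_eq_bot.mp (Nat.WithBot.lt_zero_iff.mp (by exact_mod_cast hd))
        have h := hx 1
        rw [hp] at h
        simp at h
      · -- m = 1
        have hnd : p.natDegree < 1 := by
          by_cases hp : p = 0
          · simp [hp]
          · exact (natDegree_lt_iff_degree_lt hp).mpr (by exact_mod_cast hd)
        have hev : ∀ u : DualNumber (ZMod 2), p.coeff 0 = u := by
          intro u
          have h := hx u
          rw [eval_eq_sum_range' hnd] at h
          simpa [Finset.sum_range_succ] using h
        have h01 : (0 : DualNumber (ZMod 2)) = 1 := (hev 0).symm.trans (hev 1)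
        exact zero_ne_one h01
      · -- m = 2
        have hnd : p.natDegree < 2 := by
          by_cases hp : p = 0
          · simp [hp]
          · exact (natDegree_lt_iff_degree_lt hp).mpr (by exact_mod_cast hd)
        have hev : ∀ u : DualNumber (ZMod 2), p.coeff 0 + p.coeff 1 * u = u ^ 2 := by
          intro u
          have h := hx u
          rw [eval_eq_sum_range' hnd] at h
          simp [Finset.sum_range_succ] at h
          linear_combination h
        have key : (ε : DualNumber (ZMod 2)) = 0 := by
          linear_combination (hev ε) + (ε - 1) * (hev 0) - ε * (hev 1)
            + (eps_mul_eps (R := ZMod 2))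
        exact eps_ne' key
      · -- m = 3
        have hnd : p.natDegree < 3 := by
          by_cases hp : p = 0
          · simp [hp]
          · exact (natDegree_lt_iff_degree_lt hp).mpr (by exact_mod_cast hd)
        have hev : ∀ u : DualNumber (ZMod 2),
            p.coeff 0 + p.coeff 1 * u + p.coeff 2 * u ^ 2 = u ^ 3 := by
          intro u
          have h := hx u
          rw [eval_eq_sum_range' hnd] at h
          simp [Finset.sum_range_succ] at h
          linear_combination h
        have key : (ε : DualNumber (ZMod 2)) = 0 := by
          linear_combination -(hev (1 + ε)) + (hev 1) + (hev ε) - (hev 0)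
            + (p.coeff 2 - 1) * ε * two_eq' - 3 * (eps_mul_eps (R := ZMod 2))
        exact eps_ne' key
  · have : Nat.card ((ZMod 2) × (ZMod 2)) = 4 := by simp [Nat.card_prod, Nat.card_zmod]
    exact this
end

section
/- For every polynomial P ∈ (ℤ/2ℤ)[x], the congruence x·P(x) + (1 + x)·P(x)² + P(x)⁴ ≡ 0 (mod x³ + x⁴) holds in (ℤ/2ℤ)[x]. Equivalently, in the quotient ring R = (ℤ/2ℤ)[x]/(x³ + x⁴), every element u satisfies x̄·u + (1 + x̄)·u² + u⁴ = 0, where x̄ denotes the class of x in R. Consequently s(R) ≤ 4. -/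
/-!
In characteristic 2, `x u + (1 + x) u² + u⁴ = g (g + x)` with `g = u² + u`. Since `b² = b` for every
`b ∈ 𝔽₂`, `Q² + Q` vanishes at `0` and `1` for every `Q`. Hence
`X (X + 1) ∣ g`, and writing `g = X h` gives `g (g + X) = X² (h² + h)` with `X ∣ h² + h`, so
`X³ (X + 1) = X³ + X⁴` divides the expression. In the quotient ring the resulting identity writes
`u ↦ u⁴` as a polynomial function of degree 2.
-/

open Polynomial

theorem CharTwo.mul_add_mul_sq_add_pow_four {R : Type*} [CommRing R] [CharP R 2] (x u : R) :
    x * u + (1 + x) * u ^ 2 + u ^ 4 = (u ^ 2 + u) * (u ^ 2 + u + x) := by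
  linear_combination (-u ^ 3) * CharTwo.two_eq_zero (R := R)

theorem X_sub_C_dvd_pow_card_sub_self {K : Type*} [Field K] [Fintype K] (Q : K[X]) (a : K) :
    X - C a ∣ Q ^ Fintype.card K - Q := by
  rw [dvd_iff_isRoot, IsRoot, eval_sub, eval_pow, FiniteField.pow_card, sub_self]

theorem X_add_one_dvd_sq_add_self (Q : (ZMod 2)[X]) : X + 1 ∣ Q ^ 2 + Q := by
  simpa [CharTwo.sub_eq_add] using X_sub_C_dvd_pow_card_sub_self Q 1

theorem X_dvd_sq_add_self (Q : (ZMod 2)[X]) : X ∣ Q ^ 2 + Q := by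
  simpa [CharTwo.sub_eq_add] using X_sub_C_dvd_pow_card_sub_self Q 0

theorem X_pow_three_mul_X_add_one_dvd (P : (ZMod 2)[X]) :
    X ^ 3 * (X + 1) ∣ X * P + (1 + X) * P ^ 2 + P ^ 4 := by
  obtain ⟨h, hg⟩ := X_dvd_sq_add_self P
  have hX3 : X ^ 3 ∣ (P ^ 2 + P) * (P ^ 2 + P + X) := by
    obtain ⟨k, hk⟩ := X_dvd_sq_add_self h
    exact ⟨k, by linear_combination (P ^ 2 + P + X + X * h) * hg + X ^ 2 * hk⟩
  have hcop : IsCoprime (X ^ 3 : (ZMod 2)[X]) (X + 1) := IsCoprime.pow_left ⟨-1, 1, by ring⟩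
  rw [CharTwo.mul_add_mul_sq_add_pow_four]
  exact hcop.mul_dvd hX3 ((X_add_one_dvd_sq_add_self P).mul_right _)

theorem exists_degree_lt_four_eval_eq_pow_four {A : Type*} [CommRing A] (a b : A)
    (h : ∀ u : A, a * u + b * u ^ 2 + u ^ 4 = 0) :
    ∃ p : A[X], p.degree < 4 ∧ ∀ u, p.eval u = u ^ 4 := by
  refine ⟨-(C a * X + C b * X ^ 2), ?_, fun u => ?_⟩
  · rw [degree_neg]
    compute_degree!
  · simp [eq_neg_of_add_eq_zero_right (h u)]

/-- For every `P ∈ (ℤ/2ℤ)[x]` one has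
`x·P + (1 + x)·P² + P⁴ ≡ 0 (mod x³ + x⁴)`; consequently, in the quotient
ring `R = (ℤ/2ℤ)[x]/(x³ + x⁴)` every element `u` satisfies
`x̄·u + (1 + x̄)·u² + u⁴ = 0`, and hence `s(R) ≤ 4`. -/
theorem stmt_11 :
    (∀ P : Polynomial (ZMod 2),
        X * P + (1 + X) * P ^ 2 + P ^ 4 ∈
          Ideal.span {(X : Polynomial (ZMod 2)) ^ 3 + X ^ 4}) ∧
    (∀ u : Polynomial (ZMod 2) ⧸
          Ideal.span {(X : Polynomial (ZMod 2)) ^ 3 + X ^ 4},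
        (Ideal.Quotient.mk _ (X : Polynomial (ZMod 2))) * u
          + (1 + Ideal.Quotient.mk _ (X : Polynomial (ZMod 2))) * u ^ 2
          + u ^ 4 = 0) ∧
    sInf {m : ℕ | ∃ p : Polynomial (Polynomial (ZMod 2) ⧸
          Ideal.span {(X : Polynomial (ZMod 2)) ^ 3 + X ^ 4}),
        p.degree < (m : WithBot ℕ) ∧
        ∀ x : Polynomial (ZMod 2) ⧸
            Ideal.span {(X : Polynomial (ZMod 2)) ^ 3 + X ^ 4},
          p.eval x = x ^ m} ≤ 4 := by
  have hmem (P : (ZMod 2)[X]) :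
      X * P + (1 + X) * P ^ 2 + P ^ 4 ∈ Ideal.span {(X : (ZMod 2)[X]) ^ 3 + X ^ 4} := by
    rw [Ideal.mem_span_singleton, show (X : (ZMod 2)[X]) ^ 3 + X ^ 4 = X ^ 3 * (X + 1) by ring]
    exact X_pow_three_mul_X_add_one_dvd P
  have hquot (u : (ZMod 2)[X] ⧸ Ideal.span {(X : (ZMod 2)[X]) ^ 3 + X ^ 4}) :
      Ideal.Quotient.mk _ X * u + (1 + Ideal.Quotient.mk _ X) * u ^ 2 + u ^ 4 = 0 := by
    obtain ⟨P, rfl⟩ := Ideal.Quotient.mk_surjective u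
    simpa using Ideal.Quotient.eq_zero_iff_mem.2 (hmem P)
  exact ⟨hmem, hquot, Nat.sInf_le (exists_degree_lt_four_eval_eq_pow_four _ _ hquot)⟩
end

section
/- Let R = (ℤ/2ℤ)[x]/(x³ + x⁴) and let a₀, a₁, a₂, a₃, a₄, a₅ ∈ ℤ/2ℤ be such that ∑_{k=0}^{5} a_k u^k = 0 in R for all u ∈ R (where each a_k is viewed in R via the canonical map ℤ/2ℤ → R). Then a₀ = a₁ = a₂ = a₃ = a₄ = a₅ = 0. Consequently, for the subring R' generated by 1, one has s(R'; R) ≥ 6. -/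
/-!
Here `R = 𝔽₂[x]/(x³(x + 1))`. A polynomial `f` over `𝔽₂` vanishes at `x ∈ R` iff `x³(x + 1) ∣ f`,
and at `x + 1` iff `(x + 1)³x ∣ f`; as `x³` and `(x + 1)³` are coprime, a nonzero `f` vanishing
on `R` has degree at least `6`. For the bound on `s(R'; R)`, a polynomial with coefficients in
the prime subring, of degree `< m`, inducing `u ↦ uᵐ`, lifts to `𝔽₂[T]` and subtracting it from
`Tᵐ` gives a monic polynomial of degree `m` vanishing on `R`. The infimum is over a nonempty set
(`sInf ∅ = 0` in `ℕ`) because `u⁸ = u⁴` on `R`: every `q ∈ 𝔽₂[x]` has `x(x + 1) ∣ q² - q`, hence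
`x⁴(x + 1)⁴ ∣ (q² - q)⁴ = q⁸ - q⁴`.
-/

open Polynomial

namespace Polynomial

variable {K : Type*} [CommRing K]

theorem aeval_quotientMk (I : Ideal K[X]) (q f : K[X]) :
    aeval (Ideal.Quotient.mk I q) f = Ideal.Quotient.mk I (f.comp q) := by
  rw [comp_eq_aeval, ← Ideal.Quotient.mkₐ_eq_mk K, aeval_algHom_apply]

theorem aeval_quotientMk_span_singleton_eq_zero_iff (g q f : K[X]) :
    aeval (Ideal.Quotient.mk (Ideal.span {g}) q) f = 0 ↔ g ∣ f.comp q := by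
  rw [aeval_quotientMk, Ideal.Quotient.eq_zero_iff_mem, Ideal.mem_span_singleton]

theorem eq_zero_of_degree_lt_six_of_forall_aeval_eq_zero [IsDomain K] {f : K[X]}
    (hdeg : f.degree < 6)
    (hf : ∀ u : K[X] ⧸ Ideal.span {(X : K[X]) ^ 3 + X ^ 4}, aeval u f = 0) : f = 0 := by
  have hX : X ^ 3 + X ^ 4 ∣ f := by
    simpa only [comp_X] using (aeval_quotientMk_span_singleton_eq_zero_iff _ X f).1 (hf _)
  have hX1 : (X ^ 3 + X ^ 4).comp (X - C 1) ∣ f :=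
    (dvd_comp_X_add_C_iff _ f 1).1 ((aeval_quotientMk_span_singleton_eq_zero_iff _ _ f).1 (hf _))
  have hcop : IsCoprime ((X : K[X]) ^ 3) ((X - C 1) ^ 3) :=
    IsCoprime.pow ⟨1, -1, by rw [map_one]; ring⟩
  have h6 : X ^ 3 * (X - C 1) ^ 3 ∣ f := by
    refine hcop.mul_dvd (dvd_trans ⟨1 + X, by ring⟩ hX) (dvd_trans ⟨X, ?_⟩ hX1)
    simp only [add_comp, pow_comp, X_comp, map_one]
    ring
  refine eq_zero_of_dvd_of_degree_lt h6 (hdeg.trans_le ?_)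
  rw [degree_mul, degree_pow, degree_pow, degree_X, degree_X_sub_C]
  rfl

theorem aeval_ofFn {A : Type*} [DecidableEq K] [Ring A] [Algebra K A] (n : ℕ) (a : Fin n → K)
    (u : A) :
    aeval u (ofFn n a) = ∑ k : Fin n, algebraMap K A (a k) * u ^ (k : ℕ) := by
  simp only [ofFn_eq_sum_monomial, map_sum, aeval_monomial]

theorem sub_dvd_comp_sub_comp (f a b : K[X]) : a - b ∣ f.comp a - f.comp b := by
  simpa only [eval_map, comp] using sub_dvd_eval_sub a b (f.map C)

theorem mem_lifts_algebraMap_of_coeff_mem_bot {A : Type*} [Ring A] [Algebra K A] {p : A[X]}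
    (hp : ∀ i, p.coeff i ∈ (⊥ : Subring A)) : p ∈ lifts (algebraMap K A) := by
  refine (lifts_iff_coeff_lifts p).2 fun i => ?_
  obtain ⟨n, hn⟩ := Subring.mem_bot.1 (hp i)
  exact ⟨n, by rw [map_intCast, hn]⟩

theorem exists_monic_forall_aeval_eq_zero_of_forall_eval_eq_pow [Nontrivial K] {A : Type*}
    [Ring A] [Algebra K A] {p : A[X]} {m : ℕ} (hp : p ∈ lifts (algebraMap K A))
    (hdeg : p.degree < m) (heval : ∀ x, p.eval x = x ^ m) :
    ∃ f : K[X], f.Monic ∧ f.natDegree = m ∧ ∀ x : A, aeval x f = 0 := by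
  obtain ⟨q, hqp, hqdeg⟩ := exists_degree_eq_of_mem_lifts hp
  rw [← hqdeg] at hdeg
  refine ⟨X ^ m - q, monic_X_pow_sub hdeg, ?_, fun x => ?_⟩
  · refine natDegree_eq_of_degree_eq_some ?_
    rw [degree_sub_eq_left_of_degree_lt (by rwa [degree_X_pow]), degree_X_pow]
  · rw [← eval_map_algebraMap, Polynomial.map_sub, hqp, eval_sub, heval, Polynomial.map_pow,
      map_X, eval_X_pow, sub_self]

end Polynomial

theorem ZMod.X_pow_sub_X_dvd_pow_sub (p : ℕ) [Fact p.Prime] (f : (ZMod p)[X]) :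
    X ^ p - X ∣ f ^ p - f := by
  have := sub_dvd_comp_sub_comp f (X ^ p) X
  rwa [comp_X, ← expand_eq_comp_X_pow, ZMod.expand_card] at this

theorem pow_eight_eq_pow_four (u : (ZMod 2)[X] ⧸ Ideal.span {(X : (ZMod 2)[X]) ^ 3 + X ^ 4}) :
    u ^ 8 = u ^ 4 := by
  obtain ⟨q, rfl⟩ := Ideal.Quotient.mk_surjective u
  rw [← map_pow, ← map_pow, Ideal.Quotient.eq, Ideal.mem_span_singleton]
  have hfrob : (q ^ 2 - q) ^ 4 = q ^ 8 - q ^ 4 := by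
    rw [show 4 = 2 ^ 2 by rfl, sub_pow_char_pow, ← pow_mul]
    norm_num
  have h2 : (2 : (ZMod 2)[X]) = 0 := CharTwo.two_eq_zero
  calc X ^ 3 + X ^ 4 ∣ ((X : (ZMod 2)[X]) ^ 2 - X) ^ 4 :=
        Dvd.intro (X * (X - 1) ^ 3) (by linear_combination X ^ 4 * (X - 1) ^ 3 * h2)
    _ ∣ (q ^ 2 - q) ^ 4 := pow_dvd_pow_of_dvd (ZMod.X_pow_sub_X_dvd_pow_sub 2 q) 4
    _ = q ^ 8 - q ^ 4 := hfrob

open Polynomial in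
/-- Let `R = (ℤ/2ℤ)[x]/(x³ + x⁴)`. If `a₀, …, a₅ ∈ ℤ/2ℤ`
satisfy `∑_{k=0}^{5} aₖ uᵏ = 0` for all `u ∈ R` (viewing each `aₖ` in `R`
via the canonical map `ℤ/2ℤ → R`), then all `aₖ` vanish. Consequently, for
the subring `R'` generated by `1`, one has `s(R'; R) ≥ 6`. -/
theorem stmt_12 :
    (∀ a : Fin 6 → ZMod 2,
      (∀ u : Polynomial (ZMod 2) ⧸
            Ideal.span {(X : Polynomial (ZMod 2)) ^ 3 + X ^ 4},
        ∑ k : Fin 6,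
          (algebraMap (ZMod 2) (Polynomial (ZMod 2) ⧸
              Ideal.span {(X : Polynomial (ZMod 2)) ^ 3 + X ^ 4}) (a k))
            * u ^ (k : ℕ) = 0) →
      ∀ k, a k = 0) ∧
    6 ≤ sInf {m : ℕ | ∃ p : Polynomial (Polynomial (ZMod 2) ⧸
          Ideal.span {(X : Polynomial (ZMod 2)) ^ 3 + X ^ 4}),
        (∀ i, p.coeff i ∈ (⊥ : Subring (Polynomial (ZMod 2) ⧸
            Ideal.span {(X : Polynomial (ZMod 2)) ^ 3 + X ^ 4}))) ∧
        p.degree < (m : WithBot ℕ) ∧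
        ∀ x : Polynomial (ZMod 2) ⧸
            Ideal.span {(X : Polynomial (ZMod 2)) ^ 3 + X ^ 4},
          p.eval x = x ^ m} := by
  refine ⟨fun a ha => ?_, le_csInf ⟨8, X ^ 4, fun i => ?_, ?_, fun x => ?_⟩ ?_⟩
  · have hzero : ofFn 6 a = ofFn 6 0 := by
      rw [ofFn_zero]
      exact eq_zero_of_degree_lt_six_of_forall_aeval_eq_zero (ofFn_degree_lt a) fun u => by
        rw [aeval_ofFn]
        exact ha u
    exact congrFun (injective_ofFn 6 hzero)
  · rw [coeff_X_pow]
    split_ifs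
    exacts [one_mem _, zero_mem _]
  · exact (degree_X_pow_le 4).trans_lt (by norm_num)
  · rw [eval_X_pow, pow_eight_eq_pow_four]
  · rintro m ⟨p, hp, hdeg, heval⟩
    obtain ⟨f, hmonic, hnat, hf⟩ := exists_monic_forall_aeval_eq_zero_of_forall_eval_eq_pow
      (mem_lifts_algebraMap_of_coeff_mem_bot (K := ZMod 2) hp) hdeg heval
    by_contra! hm
    refine hmonic.ne_zero (eq_zero_of_degree_lt_six_of_forall_aeval_eq_zero ?_ hf)
    rw [degree_eq_natDegree hmonic.ne_zero, hnat]
    exact_mod_cast hm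
end

section
/- In the ring R = (ℤ/2ℤ)[x]/(x³ + x⁴), every element u satisfies u³ + u⁴ + u⁵ + u⁶ = 0. Consequently, for the subring R' generated by 1, one has s(R'; R) ≤ 6 (and hence, combined with the lower bound, s(R'; R) = 6 > 4 ≥ s(R)). -/
/-! Over `𝔽₂` every polynomial `f` satisfies `X² - X ∣ f² - f`, and in characteristic 2 one has
`u³ + u⁴ + u⁵ + u⁶ = (u² - u)³`. Hence `X³(X - 1)³ ∣ f³ + f⁴ + f⁵ + f⁶`, and `X³ + X⁴ = X³(X - 1)`
over `𝔽₂`. The identity `x⁶ = -(x³ + x⁴ + x⁵)` then exhibits `x⁶` as a polynomial of degree 5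
with integer coefficients. -/

open Polynomial

theorem FiniteField.X_pow_card_sub_X_dvd_pow_card_sub {K : Type*} [Field K] [Fintype K]
    (f : K[X]) : X ^ Fintype.card K - X ∣ f ^ Fintype.card K - f := by
  have h := sub_dvd_eval_sub (X ^ Fintype.card K) X (f.map C)
  rwa [eval_map, eval_map, eval₂_C_X, ← comp, ← expand_eq_comp_X_pow,
    FiniteField.expand_card] at h

theorem CharTwo.pow_three_add_pow_four_add_pow_five_add_pow_six {R : Type*} [CommRing R]
    [CharP R 2] (u : R) : u ^ 3 + u ^ 4 + u ^ 5 + u ^ 6 = (u ^ 2 - u) ^ 3 := by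
  linear_combination (u ^ 3 - u ^ 4 + 2 * u ^ 5) * CharTwo.two_eq_zero (R := R)

theorem CharTwo.X_pow_three_add_X_pow_four_dvd {R : Type*} [CommRing R] [CharP R 2] :
    (X ^ 3 + X ^ 4 : R[X]) ∣ (X ^ 2 - X) ^ 3 :=
  ⟨(X - 1) ^ 2, by linear_combination (-X ^ 3 * (X - 1) ^ 2) * CharTwo.two_eq_zero (R := R[X])⟩

theorem ZMod.two_X_pow_three_add_X_pow_four_dvd (f : (ZMod 2)[X]) :
    X ^ 3 + X ^ 4 ∣ f ^ 3 + f ^ 4 + f ^ 5 + f ^ 6 := by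
  have h := FiniteField.X_pow_card_sub_X_dvd_pow_card_sub f
  rw [ZMod.card] at h
  rw [CharTwo.pow_three_add_pow_four_add_pow_five_add_pow_six]
  exact CharTwo.X_pow_three_add_X_pow_four_dvd.trans (pow_dvd_pow_of_dvd h 3)

theorem ZMod.two_quotient_pow_three_add_pow_four_add_pow_five_add_pow_six
    (u : (ZMod 2)[X] ⧸ Ideal.span {(X : (ZMod 2)[X]) ^ 3 + X ^ 4}) :
    u ^ 3 + u ^ 4 + u ^ 5 + u ^ 6 = 0 := by
  obtain ⟨f, rfl⟩ := Ideal.Quotient.mk_surjective u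
  simp only [← map_pow, ← map_add, Ideal.Quotient.eq_zero_iff_mem, Ideal.mem_span_singleton]
  exact ZMod.two_X_pow_three_add_X_pow_four_dvd f

section PowerReduction

variable {R : Type*} [CommRing R]

/-- `s(S; R)` is the least `m` with `IsPowerReducible S m`. -/
def IsPowerReducible (S : Subring R) (m : ℕ) : Prop :=
  ∃ p : R[X], (∀ i, p.coeff i ∈ S) ∧ p.degree < (m : WithBot ℕ) ∧ ∀ x, p.eval x = x ^ m

theorem isPowerReducible_bot_of_aeval (m : ℕ) (q : ℤ[X]) (hq : q.degree < m)
    (h : ∀ x : R, aeval x q = x ^ m) : IsPowerReducible (⊥ : Subring R) m := by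
  refine ⟨q.map (algebraMap ℤ R), fun i => ?_, degree_map_le.trans_lt hq, fun x => ?_⟩
  · rw [coeff_map, algebraMap_int_eq, eq_intCast]
    exact intCast_mem _ _
  · rw [eval_map_algebraMap, h]

end PowerReduction

open Polynomial in
/-- In `R = (ℤ/2ℤ)[x]/(x³ + x⁴)`, every element `u` satisfies
`u³ + u⁴ + u⁵ + u⁶ = 0`. Consequently, for the subring `R'` generated by `1`,
one has `s(R'; R) ≤ 6`. -/
theorem stmt_13 :
    (∀ u : Polynomial (ZMod 2) ⧸
          Ideal.span {(X : Polynomial (ZMod 2)) ^ 3 + X ^ 4},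
        u ^ 3 + u ^ 4 + u ^ 5 + u ^ 6 = 0) ∧
    sInf {m : ℕ | ∃ p : Polynomial (Polynomial (ZMod 2) ⧸
          Ideal.span {(X : Polynomial (ZMod 2)) ^ 3 + X ^ 4}),
        (∀ i, p.coeff i ∈ (⊥ : Subring (Polynomial (ZMod 2) ⧸
            Ideal.span {(X : Polynomial (ZMod 2)) ^ 3 + X ^ 4}))) ∧
        p.degree < (m : WithBot ℕ) ∧
        ∀ x : Polynomial (ZMod 2) ⧸
            Ideal.span {(X : Polynomial (ZMod 2)) ^ 3 + X ^ 4},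
          p.eval x = x ^ m} ≤ 6 := by
  have key := ZMod.two_quotient_pow_three_add_pow_four_add_pow_five_add_pow_six
  refine ⟨key, Nat.sInf_le ?_⟩
  refine isPowerReducible_bot_of_aeval 6 (-(X ^ 3 + X ^ 4 + X ^ 5)) (by compute_degree!)
    fun x => ?_
  simp only [map_neg, map_add, map_pow, aeval_X]
  linear_combination -key x
end

section
/- In the ring R = (ℤ/2ℤ)[x₁, x₂, …]/(x₁², x₂², …), the quotient of the polynomial ring over ℤ/2ℤ in countably many variables by the ideal generated by the squares of all variables, every element u satisfies u⁴ = u². In particular, R is an infinite commutative ring with unit element for which s(R) < ∞ (indeed s(R) ≤ 4). -/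
open MvPolynomial

private lemma sq_sub_constCoeff_mem (p : MvPolynomial ℕ (ZMod 2)) :
    p ^ 2 - C (constantCoeff p) ∈
      Ideal.span (Set.range fun i : ℕ => (X i : MvPolynomial ℕ (ZMod 2)) ^ 2) := by
  induction p using MvPolynomial.induction_on with
  | C a =>
      have ha : a ^ 2 = a := by revert a; decide
      simp [← C_pow, ha]
  | add p q hp hq =>
      have h2 : (p + q) ^ 2 = p ^ 2 + q ^ 2 := add_pow_char _ _ _
      have : (p + q) ^ 2 - C (constantCoeff (p + q)) =
          (p ^ 2 - C (constantCoeff p)) + (q ^ 2 - C (constantCoeff q)) := by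
        rw [h2]; simp [map_add]; ring
      rw [this]
      exact Ideal.add_mem _ hp hq
  | mul_X p i hp =>
      have hmem : (X i : MvPolynomial ℕ (ZMod 2)) ^ 2 ∈
          Ideal.span (Set.range fun i : ℕ => (X i : MvPolynomial ℕ (ZMod 2)) ^ 2) :=
        Ideal.subset_span ⟨i, rfl⟩
      have : (p * X i) ^ 2 - C (constantCoeff (p * X i)) = p ^ 2 * (X i) ^ 2 := by
        simp [mul_pow]
      rw [this]
      exact Ideal.mul_mem_left _ _ hmem

open MvPolynomial in
/-- In the ring
`R = (ℤ/2ℤ)[x₁, x₂, …]/(x₁², x₂², …)` (countably many variables, quotient by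
the ideal generated by the squares of all variables), every element `u`
satisfies `u⁴ = u²`. In particular `R` is an infinite commutative ring with
unit element with `s(R) ≤ 4 < ∞`. -/
theorem stmt_14 :
    (∀ u : MvPolynomial ℕ (ZMod 2) ⧸
          Ideal.span (Set.range fun i : ℕ => (X i : MvPolynomial ℕ (ZMod 2)) ^ 2),
        u ^ 4 = u ^ 2) ∧
    Infinite (MvPolynomial ℕ (ZMod 2) ⧸
        Ideal.span (Set.range fun i : ℕ => (X i : MvPolynomial ℕ (ZMod 2)) ^ 2)) ∧
    sInf {m : ℕ | ∃ p : Polynomial (MvPolynomial ℕ (ZMod 2) ⧸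
          Ideal.span (Set.range fun i : ℕ => (X i : MvPolynomial ℕ (ZMod 2)) ^ 2)),
        p.degree < (m : WithBot ℕ) ∧
        ∀ x : MvPolynomial ℕ (ZMod 2) ⧸
            Ideal.span (Set.range fun i : ℕ => (X i : MvPolynomial ℕ (ZMod 2)) ^ 2),
          p.eval x = x ^ m} ≤ 4 := by
  set I : Ideal (MvPolynomial ℕ (ZMod 2)) :=
    Ideal.span (Set.range fun i : ℕ => (X i : MvPolynomial ℕ (ZMod 2)) ^ 2) with hI
  have hpow : ∀ u : MvPolynomial ℕ (ZMod 2) ⧸ I, u ^ 4 = u ^ 2 := by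
    intro u
    obtain ⟨p, rfl⟩ := Ideal.Quotient.mk_surjective u
    have key : (Ideal.Quotient.mk I) (p ^ 2) =
        (Ideal.Quotient.mk I) (C (constantCoeff p)) :=
      Ideal.Quotient.eq.mpr (sq_sub_constCoeff_mem p)
    have hc : (constantCoeff p) ^ 2 = constantCoeff p := by
      generalize constantCoeff p = a; revert a; decide
    calc (Ideal.Quotient.mk I p) ^ 4
        = ((Ideal.Quotient.mk I) (p ^ 2)) ^ 2 := by
            have h4 : p ^ 4 = (p ^ 2) ^ 2 := by ring
            rw [← map_pow, ← map_pow, h4]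
      _ = ((Ideal.Quotient.mk I) (C (constantCoeff p))) ^ 2 := by rw [key]
      _ = (Ideal.Quotient.mk I) (C ((constantCoeff p) ^ 2)) := by
            rw [← map_pow, C_pow]
      _ = (Ideal.Quotient.mk I) (C (constantCoeff p)) := by rw [hc]
      _ = (Ideal.Quotient.mk I p) ^ 2 := key.symm
  refine ⟨hpow, ?_, ?_⟩
  · -- infinite: n ↦ mk (X n) is injective
    refine Infinite.of_injective (fun n => Ideal.Quotient.mk I (X n)) ?_
    intro n m hnm
    by_contra hne
    -- evaluate at X n ↦ ε, others ↦ 0, into dual numbers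
    let φ : MvPolynomial ℕ (ZMod 2) →+* DualNumber (ZMod 2) :=
      (aeval (fun i : ℕ => if i = n then (DualNumber.eps : DualNumber (ZMod 2)) else 0)).toRingHom
    have hker : I ≤ RingHom.ker φ := by
      rw [hI, Ideal.span_le]
      rintro _ ⟨i, rfl⟩
      simp only [SetLike.mem_coe, RingHom.mem_ker, map_pow, φ, AlgHom.toRingHom_eq_coe,
        RingHom.coe_coe, aeval_X]
      by_cases h : i = n <;> simp [h, sq, DualNumber.eps_mul_eps]
    let ψ := Ideal.Quotient.lift I φ (fun a ha => hker ha)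
    have h1 : ψ (Ideal.Quotient.mk I (X n)) = DualNumber.eps := by
      simp [ψ, φ]
    have h2 : ψ (Ideal.Quotient.mk I (X m)) = 0 := by
      simp [ψ, φ, Ne.symm hne]
    have hnm' : Ideal.Quotient.mk I (X n) = Ideal.Quotient.mk I (X m) := hnm
    rw [hnm', h2] at h1
    have := congrArg TrivSqZeroExt.snd h1
    rw [DualNumber.snd_eps, TrivSqZeroExt.snd_zero] at this
    exact one_ne_zero this.symm
  · apply Nat.sInf_le
    refine ⟨Polynomial.X ^ 2, ?_, ?_⟩
    · exact lt_of_le_of_lt (Polynomial.degree_X_pow_le 2)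
        (by exact_mod_cast (by norm_num : (2:ℕ) < 4))
    · intro x
      simp [hpow x]
end

section
/- Let ρ be the four-element ring {0, 1, a, 1+a} with 1+1 = 0 and a² = 0, i.e., ρ = (ℤ/2ℤ)[X]/(X²), the dual numbers over ℤ/2ℤ. The function f : ρ → ρ defined by f(0) = 1 and f(x) = 0 for x ≠ 0 is not a polyfunction: there is no polynomial p ∈ ρ[x] with p(x) = f(x) for all x ∈ ρ. -/
open TrivSqZeroExt Polynomial


/-- Let ρ be the four-element ring `{0, 1, a, 1+a}` with
`1 + 1 = 0` and `a² = 0`, i.e. the dual numbers over `ℤ/2ℤ`. The function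
`f : ρ → ρ` with `f(0) = 1` and `f(x) = 0` for `x ≠ 0` is not a polyfunction:
no polynomial `p ∈ ρ[x]` satisfies `p(x) = f(x)` for all `x ∈ ρ`. -/
theorem stmt_15 (f : DualNumber (ZMod 2) → DualNumber (ZMod 2))
    (hf0 : f 0 = 1) (hf : ∀ x : DualNumber (ZMod 2), x ≠ 0 → f x = 0) :
    ¬ ∃ p : Polynomial (DualNumber (ZMod 2)),
        ∀ x : DualNumber (ZMod 2), p.eval x = f x := by
  rintro ⟨p, hp⟩
  set φ := (fstHom (ZMod 2) (ZMod 2) (ZMod 2)).toRingHom with hφ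
  have heps : (DualNumber.eps : DualNumber (ZMod 2)) ≠ 0 := by
    intro h
    have := congrArg snd h
    simp at this
  have h1 : φ (p.eval DualNumber.eps) = φ (p.eval 0) := by
    have e1 := eval₂_hom (p := p) φ DualNumber.eps
    have e2 := eval₂_hom (p := p) φ 0
    have : φ DualNumber.eps = φ 0 := by simp [hφ]
    rw [← e1, ← e2, this]
  rw [hp _, hp 0, hf _ heps, hf0] at h1
  simp at h1
end
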